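/- arXiv:2403.18890 — 7 statements merged into one kernel-verified Lean document; each statement's English description precedes it below -/
import Mathlib

section
/- For every integer α ≥ 2 and every fixed r ∈ [0,1], the asymptotic Rényi-α Page curve satisfies lim_{s→0} Φ_α(s,r)/s² = (α/(α−1))·r(1−r). -/
open scoped BigOperators Topology ENNReal
open MeasureTheory Filter Real Matrix

noncomputable section

/-- Rising factorial `(x)_t = x (x+1) ⋯ (x+t−1)`. -/
def rf (x : ℝ) (t : ℕ) : ℝ := ∏ j ∈ Finset.range t, (x + j)

/-- The `i`-th Catalan number `C_i = (1/(i+1))·binom(2i,i)` as a real number. -/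
def catR (i : ℕ) : ℝ := (Nat.choose (2 * i) i : ℝ) / (i + 1)

/-- `G_i(r) = r − C_i·r^{i+1}·₂F₁(1−i, i; 2+i; r)` (terminating hypergeometric sum). -/
def Gfun (i : ℕ) (r : ℝ) : ℝ :=
  r - catR i * r ^ (i + 1) *
    ∑ t ∈ Finset.range i,
      (rf (1 - i) t * rf i t / (rf (2 + i) t * (Nat.factorial t))) * r ^ t

/-- The Rényi-α Page-curve function `Φ_α(s,r)` for integer `α ≥ 2`
(series over `ℓ ≥ 1`, written with index shift `ℓ = l + 1`;
`ζ = 1` if `α` is even, `ζ = 0` if `α` is odd, and `a = ⌊(α−1)/2⌋`). -/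
def PhiA (α : ℕ) (s r : ℝ) : ℝ :=
  (1 / ((α : ℝ) - 1)) *
    ∑' l : ℕ,
      ((if Even α then (1 : ℝ) else 0) * Real.tanh (2 * s) ^ (2 * (l + 1)) / (2 * ((l : ℝ) + 1)) +
          ∑ m ∈ Finset.Icc 1 ((α - 1) / 2),
            Real.sinh (2 * s) ^ (2 * (l + 1)) /
              (((l : ℝ) + 1) *
                (Real.cosh (2 * s) ^ 2 + Real.cot (Real.pi * m / α) ^ 2) ^ (l + 1))) *
        Gfun (l + 1) r

section AuxProof
open Finset

lemma G1 (r : ℝ) : Gfun 1 r = r - r ^ 2 := by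
  simp [Gfun, catR, rf]
  ring

lemma rf_pos {x : ℝ} (hx : 0 < x) (t : ℕ) : 0 < rf x t :=
  Finset.prod_pos fun j _ => by positivity

lemma choose_le_two_pow (n k : ℕ) : n.choose k ≤ 2 ^ n := by
  rcases le_or_gt k n with h | h
  · calc n.choose k ≤ ∑ m ∈ range (n+1), n.choose m :=
        Finset.single_le_sum (fun i _ => Nat.zero_le _) (mem_range.2 (Nat.lt_succ_of_le h))
    _ = 2 ^ n := Nat.sum_range_choose n
  · simp [Nat.choose_eq_zero_of_lt h]

lemma abs_rf_one_sub {i t : ℕ} (ht : t < i) :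
    |rf (1 - (i : ℝ)) t| ≤ (t.factorial : ℝ) * 2 ^ i := by
  have h1 : |rf (1 - (i : ℝ)) t| = ((i - 1).descFactorial t : ℝ) := by
    rw [rf, Finset.abs_prod, Nat.descFactorial_eq_prod_range, Nat.cast_prod]
    refine Finset.prod_congr rfl fun j hj => ?_
    have hj2 : j + 2 ≤ i := by have := mem_range.1 hj; omega
    have hcast : ((i - 1 - j : ℕ) : ℝ) = (i : ℝ) - 1 - j := by
      have h1i : 1 ≤ i := by omega
      have hji : j ≤ i - 1 := by omega
      rw [Nat.cast_sub hji, Nat.cast_sub h1i]; push_cast; ring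
    have hle : (1 : ℝ) - i + j ≤ 0 := by
      have : ((j : ℝ)) + 2 ≤ i := by exact_mod_cast Nat.cast_le.2 hj2
      linarith
    rw [abs_of_nonpos hle, hcast]; ring
  rw [h1, Nat.descFactorial_eq_factorial_mul_choose, Nat.cast_mul]
  have : ((i - 1).choose t : ℝ) ≤ (2 : ℝ) ^ i := by
    calc ((i - 1).choose t : ℝ) ≤ ((2 ^ (i - 1) : ℕ) : ℝ) :=
      Nat.cast_le.2 (choose_le_two_pow _ _)
    _ ≤ (2 : ℝ) ^ i := by
      push_cast
      exact pow_le_pow_right₀ one_le_two (Nat.sub_le i 1)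
  have h0 : (0 : ℝ) ≤ (t.factorial : ℝ) := Nat.cast_nonneg _
  exact mul_le_mul_of_nonneg_left this h0

lemma rf_mono (i : ℕ) (t : ℕ) (hi : 1 ≤ i) : rf (i : ℝ) t ≤ rf (2 + i : ℝ) t := by
  refine Finset.prod_le_prod (fun j _ => by positivity) (fun j _ => by linarith)

lemma Gbound {i : ℕ} (hi : 1 ≤ i) {r : ℝ} (hr : r ∈ Set.Icc (0:ℝ) 1) :
    |Gfun i r| ≤ 32 ^ i := by
  obtain ⟨hr0, hr1⟩ := hr
  have hrp : ∀ n : ℕ, r ^ n ≤ 1 := fun n => pow_le_one₀ hr0 hr1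
  have hrpn : ∀ n : ℕ, 0 ≤ r ^ n := fun n => pow_nonneg hr0 n
  have hcoef : ∀ t ∈ range i,
      |(rf (1 - (i:ℝ)) t * rf i t / (rf (2 + i) t * (t.factorial : ℝ))) * r ^ t|
        ≤ 2 ^ i := by
    intro t ht
    have ht' : t < i := mem_range.1 ht
    have hip : (0:ℝ) < i := by exact_mod_cast hi
    have h2ip : (0:ℝ) < 2 + i := by positivity
    have hpos1 := rf_pos hip t
    have hpos2 := rf_pos h2ip t
    have hfac : (0:ℝ) < (t.factorial : ℝ) := by exact_mod_cast t.factorial_pos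
    have key : |rf (1 - (i:ℝ)) t * rf i t / (rf (2 + i) t * (t.factorial : ℝ))| ≤ 2 ^ i := by
      rw [abs_div, abs_of_nonneg (le_of_lt (mul_pos hpos2 hfac)), abs_mul,
        abs_of_nonneg hpos1.le, div_le_iff₀ (mul_pos hpos2 hfac)]
      calc |rf (1 - (i:ℝ)) t| * rf (i:ℝ) t
          ≤ ((t.factorial : ℝ) * 2 ^ i) * rf (2 + i:ℝ) t :=
            mul_le_mul (abs_rf_one_sub ht') (rf_mono i t hi) hpos1.le (by positivity)
        _ = 2 ^ i * (rf (2 + i:ℝ) t * (t.factorial : ℝ)) := by ring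
    rw [abs_mul, abs_of_nonneg (hrpn t)]
    calc |rf (1 - (i:ℝ)) t * rf i t / (rf (2 + i) t * (t.factorial : ℝ))| * r ^ t
        ≤ 2 ^ i * 1 := mul_le_mul key (hrp t) (hrpn t) (by positivity)
      _ = 2 ^ i := mul_one _
  have hsum : |∑ t ∈ range i,
      (rf (1 - (i:ℝ)) t * rf i t / (rf (2 + i) t * (t.factorial : ℝ))) * r ^ t| ≤ i * 2 ^ i := by
    calc |∑ t ∈ range i, (rf (1 - (i:ℝ)) t * rf i t / (rf (2 + i) t * (t.factorial : ℝ))) * r ^ t|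
        ≤ ∑ t ∈ range i, |(rf (1 - (i:ℝ)) t * rf i t / (rf (2 + i) t * (t.factorial : ℝ))) * r ^ t| :=
          Finset.abs_sum_le_sum_abs _ _
      _ ≤ ∑ _t ∈ range i, (2:ℝ) ^ i := Finset.sum_le_sum hcoef
      _ = i * 2 ^ i := by simp [Finset.sum_const]
  have hcat : (0:ℝ) ≤ catR i ∧ catR i ≤ 4 ^ i := by
    constructor
    · exact div_nonneg (Nat.cast_nonneg _) (by positivity)
    · rw [catR, div_le_iff₀ (by positivity)]
      calc ((Nat.choose (2*i) i : ℕ) : ℝ) ≤ ((2 ^ (2*i) : ℕ) : ℝ) :=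
            Nat.cast_le.2 (choose_le_two_pow _ _)
        _ = 4 ^ i := by push_cast; rw [pow_mul]; norm_num
        _ ≤ 4 ^ i * ((i:ℝ) + 1) := le_mul_of_one_le_right (by positivity) (by have : (0:ℝ) ≤ i := Nat.cast_nonneg i; linarith)
  have hile : (i : ℝ) ≤ 2 ^ i := by exact_mod_cast (Nat.lt_two_pow_self (n := i)).le
  calc |Gfun i r| ≤ |r| + |catR i * r ^ (i+1) *
        ∑ t ∈ range i, (rf (1 - (i:ℝ)) t * rf i t / (rf (2 + i) t * (t.factorial : ℝ))) * r ^ t| := by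
        rw [Gfun]; push_cast; exact abs_sub _ _
    _ ≤ 1 + 4 ^ i * 1 * ((i:ℝ) * 2 ^ i) := by
        refine add_le_add (abs_le.2 ⟨by linarith, hr1⟩) ?_
        rw [abs_mul, abs_mul, abs_of_nonneg hcat.1, abs_of_nonneg (hrpn _)]
        refine mul_le_mul (mul_le_mul hcat.2 (hrp _) (hrpn _) (by positivity)) hsum (abs_nonneg _) (by positivity)
    _ ≤ 16 ^ i + 4 ^ i * (2 ^ i * 2 ^ i) := by
        have h1 : (1:ℝ) ≤ 16 ^ i := one_le_pow₀ (by norm_num)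
        have : 4 ^ i * 1 * ((i:ℝ) * 2 ^ i) ≤ 4 ^ i * (2 ^ i * 2 ^ i) := by
          rw [mul_one]
          refine mul_le_mul_of_nonneg_left ?_ (by positivity)
          exact mul_le_mul_of_nonneg_right hile (by positivity)
        linarith
    _ ≤ 32 ^ i := by
        have : (4:ℝ) ^ i * (2 ^ i * 2 ^ i) = 16 ^ i := by
          rw [← mul_pow, ← mul_pow]; norm_num
        rw [this]
        have : (16:ℝ) ^ i + 16 ^ i = 2 * 16 ^ i := by ring
        rw [this]
        calc (2:ℝ) * 16 ^ i ≤ 2 ^ i * 16 ^ i :=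
              mul_le_mul_of_nonneg_right (by calc (2:ℝ) = 2^1 := (pow_one 2).symm
                _ ≤ 2^i := pow_le_pow_right₀ one_le_two hi) (by positivity)
          _ = 32 ^ i := by rw [← mul_pow]; norm_num

lemma cos_sum_full (α : ℕ) (hα : 2 ≤ α) :
    ∑ m ∈ Finset.Icc 1 (α - 1), Real.cos (2 * π * m / α) = -1 := by
  have hα0 : (α : ℂ) ≠ 0 := by exact Nat.cast_ne_zero.2 (by omega)
  set ζ : ℂ := Complex.exp (2 * Real.pi * Complex.I / α) with hζ
  have hζα : ζ ^ α = 1 := by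
    rw [hζ, ← Complex.exp_nat_mul]
    rw [mul_div_cancel₀ _ hα0]
    exact Complex.exp_two_pi_mul_I
  have hζ1 : ζ ≠ 1 := by
    rw [hζ]
    intro h
    rw [Complex.exp_eq_one_iff] at h
    obtain ⟨n, hn⟩ := h
    rw [div_eq_iff hα0] at hn
    have h2 : (2 * (Real.pi : ℂ) * Complex.I) ≠ 0 := by
      simp [Complex.I_ne_zero, Real.pi_ne_zero]
    have h3 : ((n * α : ℤ) : ℂ) = 1 := by
      apply mul_left_cancel₀ h2
      push_cast
      linear_combination -hn
    have h4 : (n * α : ℤ) = 1 := by exact_mod_cast h3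
    have h5 : (α : ℤ) ∣ 1 := ⟨n, by linarith⟩
    have h6 := Int.le_of_dvd one_pos h5
    omega
  have hsum : ∑ m ∈ Finset.range α, ζ ^ m = 0 := by
    rw [geom_sum_eq hζ1, hζα, sub_self, zero_div]
  have hre : ∀ m : ℕ, (ζ ^ m).re = Real.cos (2 * π * m / α) := by
    intro m
    rw [hζ, ← Complex.exp_nat_mul]
    have : (m : ℂ) * (2 * Real.pi * Complex.I / α) = ((2 * π * m / α : ℝ) : ℂ) * Complex.I := by
      push_cast; ring
    rw [this, Complex.exp_ofReal_mul_I_re]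
  have h0 : ∑ m ∈ Finset.range α, Real.cos (2 * π * m / α) = 0 := by
    have := congrArg Complex.re hsum
    rw [Complex.re_sum] at this
    simpa [hre] using this
  have hins : insert 0 (Finset.Icc 1 (α - 1)) = Finset.range α := by
    ext x; simp [Finset.mem_range, Finset.mem_Icc]; omega
  have := Finset.sum_insert (a := 0) (s := Finset.Icc 1 (α-1))
    (f := fun m : ℕ => Real.cos (2 * π * m / α)) (by simp)
  rw [hins, h0] at this
  simp at this
  linarith

lemma cos_reflect (α m : ℕ) (hm : m ≤ α) :
    Real.cos (2 * π * ((α : ℝ) - m) / α) = Real.cos (2 * π * m / α) := by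
  rcases eq_or_ne (α:ℝ) 0 with h | h
  · simp [h]
  · have : 2 * π * ((α : ℝ) - m) / α = 2 * π - 2 * π * m / α := by field_simp
    rw [this, Real.cos_sub, Real.cos_two_pi, Real.sin_two_pi]
    ring

lemma cos_sum_half (α : ℕ) (hα : 2 ≤ α) :
    ∑ m ∈ Finset.Icc 1 ((α - 1) / 2), Real.cos (2 * π * m / α)
      = if Even α then 0 else -(1/2) := by
  set a := (α - 1) / 2 with ha
  set f : ℕ → ℝ := fun m => Real.cos (2 * π * m / α) with hf
  have hrefl : ∑ m ∈ Finset.Icc (α - a) (α - 1), f m = ∑ m ∈ Finset.Icc 1 a, f m := by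
    refine Finset.sum_nbij' (i := fun m => α - m) (j := fun m => α - m) ?_ ?_ ?_ ?_ ?_
    · intro x hx; simp only [Finset.mem_Icc] at *; omega
    · intro x hx; simp only [Finset.mem_Icc] at *; omega
    · intro x hx; simp only [Finset.mem_Icc] at *; omega
    · intro x hx; simp only [Finset.mem_Icc] at *; omega
    · intro x hx
      simp only [Finset.mem_Icc] at hx
      have hxα : x ≤ α := by omega
      have : ((α - x : ℕ) : ℝ) = (α : ℝ) - x := by
        rw [Nat.cast_sub hxα]
      simp only [hf, this]
      exact (cos_reflect α x hxα).symm
  have hfull := cos_sum_full α hα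
  rcases Nat.even_or_odd α with he | ho
  · -- even: α = 2b, a = b - 1, midpoint b
    obtain ⟨b, hb⟩ := he
    have hb2 : α = 2 * b := by omega
    have hb1 : 1 ≤ b := by omega
    have hs1 : Finset.Icc 1 (α - 1) = Finset.Icc 1 a ∪ Finset.Icc (a + 1) (α - 1) := by
      ext x; simp [Finset.mem_Icc, Finset.mem_union]; omega
    have hd1 : Disjoint (Finset.Icc 1 a) (Finset.Icc (a + 1) (α - 1)) := by
      simp [Finset.disjoint_left, Finset.mem_Icc]; omega
    have hs2 : Finset.Icc (a + 1) (α - 1) = insert b (Finset.Icc (α - a) (α - 1)) := by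
      ext x; simp [Finset.mem_Icc, Finset.mem_insert]; omega
    have hnm : b ∉ Finset.Icc (α - a) (α - 1) := by simp [Finset.mem_Icc]; omega
    have hmid : f b = -1 := by
      have hαne : (α : ℝ) ≠ 0 := Nat.cast_ne_zero.2 (by omega)
      have : 2 * π * (b:ℝ) / α = π := by
        rw [hb2]; push_cast; have hbne : (b:ℝ) ≠ 0 := Nat.cast_ne_zero.2 (by omega); field_simp
      simp [hf, this, Real.cos_pi]
    have : (-1 : ℝ) = (∑ m ∈ Finset.Icc 1 a, f m) + (f b + ∑ m ∈ Finset.Icc (α - a) (α - 1), f m) := by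
      rw [← hfull, hs1, Finset.sum_union hd1, hs2, Finset.sum_insert hnm]
    rw [hrefl, hmid] at this
    have heven : Even α := ⟨b, by omega⟩
    rw [if_pos heven]
    linarith
  · -- odd
    obtain ⟨b, hb⟩ := ho
    have hb1 : 1 ≤ b := by omega
    have hs1 : Finset.Icc 1 (α - 1) = Finset.Icc 1 a ∪ Finset.Icc (α - a) (α - 1) := by
      ext x; simp [Finset.mem_Icc, Finset.mem_union]; omega
    have hd1 : Disjoint (Finset.Icc 1 a) (Finset.Icc (α - a) (α - 1)) := by
      simp [Finset.disjoint_left, Finset.mem_Icc]; omega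
    have : (-1 : ℝ) = (∑ m ∈ Finset.Icc 1 a, f m) + ∑ m ∈ Finset.Icc (α - a) (α - 1), f m := by
      rw [← hfull, hs1, Finset.sum_union hd1]
    rw [hrefl] at this
    have hodd : ¬ Even α := by simp [Nat.even_iff, hb]
    rw [if_neg hodd]
    linarith

lemma sin_sq_sum (α : ℕ) (hα : 2 ≤ α) :
    (if Even α then (1:ℝ) else 0) * 2
      + 4 * ∑ m ∈ Finset.Icc 1 ((α - 1) / 2), Real.sin (π * m / α) ^ 2 = α := by
  have hrw : ∀ m : ℕ, Real.sin (π * m / α) ^ 2 = 1/2 - Real.cos (2 * π * m / α) / 2 := by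
    intro m
    rw [Real.sin_sq_eq_half_sub]
    congr 2
    ring
  rw [Finset.sum_congr rfl (fun m _ => hrw m), Finset.sum_sub_distrib, Finset.sum_const,
    ← Finset.sum_div, cos_sum_half α hα]
  have hcard : (Finset.Icc 1 ((α-1)/2)).card = (α-1)/2 := by
    rw [Nat.card_Icc]; omega
  rw [hcard, nsmul_eq_mul]
  rcases Nat.even_or_odd α with he | ho
  · rw [if_pos he, if_pos he]
    obtain ⟨b, hb⟩ := he
    have : (α - 1) / 2 = b - 1 := by omega
    rw [this]
    have hb1 : 1 ≤ b := by omega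
    have : ((b - 1 : ℕ) : ℝ) = (b : ℝ) - 1 := by rw [Nat.cast_sub hb1]; simp
    rw [this]
    have : (α : ℝ) = 2 * b := by exact_mod_cast congrArg (Nat.cast : ℕ → ℝ) (by omega : α = 2*b)
    rw [this]; push_cast; ring
  · have hne : ¬ Even α := Nat.not_even_iff_odd.2 ho
    rw [if_neg hne, if_neg hne]
    obtain ⟨b, hb⟩ := ho
    have : (α - 1) / 2 = b := by omega
    rw [this]
    have : (α : ℝ) = 2 * b + 1 := by exact_mod_cast congrArg (Nat.cast : ℕ → ℝ) hb
    rw [this]; push_cast; ring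

def termT (α : ℕ) (r : ℝ) (l : ℕ) (s : ℝ) : ℝ :=
  ((if Even α then (1 : ℝ) else 0) * Real.tanh (2 * s) ^ (2 * (l + 1)) / (2 * ((l : ℝ) + 1)) +
      ∑ m ∈ Finset.Icc 1 ((α - 1) / 2),
        Real.sinh (2 * s) ^ (2 * (l + 1)) /
          (((l : ℝ) + 1) *
            (Real.cosh (2 * s) ^ 2 + Real.cot (Real.pi * m / α) ^ 2) ^ (l + 1))) *
    Gfun (l + 1) r

lemma coef_nonneg (α : ℕ) (l : ℕ) (s : ℝ) :
    0 ≤ (if Even α then (1 : ℝ) else 0) * Real.tanh (2 * s) ^ (2 * (l + 1)) / (2 * ((l : ℝ) + 1)) +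
      ∑ m ∈ Finset.Icc 1 ((α - 1) / 2),
        Real.sinh (2 * s) ^ (2 * (l + 1)) /
          (((l : ℝ) + 1) * (Real.cosh (2 * s) ^ 2 + Real.cot (Real.pi * m / α) ^ 2) ^ (l + 1)) := by
  have h1 : (0:ℝ) ≤ Real.tanh (2*s) ^ (2*(l+1)) := by
    rw [pow_mul]; positivity
  have h2 : ∀ m : ℕ, (0:ℝ) ≤ Real.sinh (2*s) ^ (2*(l+1)) /
      (((l : ℝ) + 1) * (Real.cosh (2 * s) ^ 2 + Real.cot (Real.pi * m / α) ^ 2) ^ (l + 1)) := by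
    intro m
    have hs : (0:ℝ) ≤ Real.sinh (2*s) ^ (2*(l+1)) := by rw [pow_mul]; positivity
    have hc : (0:ℝ) < Real.cosh (2*s) ^ 2 + Real.cot (Real.pi * m / α) ^ 2 := by
      have := Real.cosh_pos (2*s); positivity
    positivity
  refine add_nonneg ?_ (Finset.sum_nonneg fun m _ => h2 m)
  split_ifs <;> [skip; simp] <;> positivity

lemma coef_le (α : ℕ) (l : ℕ) (s : ℝ) :
    (if Even α then (1 : ℝ) else 0) * Real.tanh (2 * s) ^ (2 * (l + 1)) / (2 * ((l : ℝ) + 1)) +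
      ∑ m ∈ Finset.Icc 1 ((α - 1) / 2),
        Real.sinh (2 * s) ^ (2 * (l + 1)) /
          (((l : ℝ) + 1) * (Real.cosh (2 * s) ^ 2 + Real.cot (Real.pi * m / α) ^ 2) ^ (l + 1))
      ≤ (((α - 1) / 2 : ℕ) + 1) * (Real.tanh (2 * s) ^ 2) ^ (l + 1) := by
  have hT : (0:ℝ) ≤ (Real.tanh (2*s) ^ 2) ^ (l+1) := by positivity
  have hml : (1:ℝ) ≤ (l:ℝ) + 1 := by have : (0:ℝ) ≤ l := Nat.cast_nonneg l; linarith
  have h1 : (if Even α then (1 : ℝ) else 0) * Real.tanh (2 * s) ^ (2 * (l + 1)) / (2 * ((l : ℝ) + 1))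
      ≤ (Real.tanh (2 * s) ^ 2) ^ (l + 1) := by
    rw [pow_mul]
    have hnum0 : (0:ℝ) ≤ (if Even α then (1 : ℝ) else 0) * (Real.tanh (2*s) ^ 2) ^ (l+1) := by
      split_ifs <;> simp [hT]
    have hnum : (if Even α then (1 : ℝ) else 0) * (Real.tanh (2*s) ^ 2) ^ (l+1)
        ≤ (Real.tanh (2*s) ^ 2) ^ (l+1) := by
      split_ifs <;> simp [hT]
    exact (div_le_self hnum0 (by linarith)).trans hnum
  have h2 : ∀ m ∈ Finset.Icc 1 ((α-1)/2),
      Real.sinh (2 * s) ^ (2 * (l + 1)) /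
          (((l : ℝ) + 1) * (Real.cosh (2 * s) ^ 2 + Real.cot (Real.pi * m / α) ^ 2) ^ (l + 1))
        ≤ (Real.tanh (2 * s) ^ 2) ^ (l + 1) := by
    intro m _
    have hcosh := Real.cosh_pos (2*s)
    have hd1 : (0:ℝ) < (Real.cosh (2*s) ^ 2) ^ (l+1) := by positivity
    have hd2 : (Real.cosh (2*s) ^ 2) ^ (l+1)
        ≤ ((l : ℝ) + 1) * (Real.cosh (2 * s) ^ 2 + Real.cot (Real.pi * m / α) ^ 2) ^ (l + 1) := by
      have hc2 : Real.cosh (2*s) ^ 2 ≤ Real.cosh (2*s) ^ 2 + Real.cot (Real.pi * m / α) ^ 2 := by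
        nlinarith [sq_nonneg (Real.cot (Real.pi * m / α))]
      calc (Real.cosh (2*s) ^ 2) ^ (l+1)
          ≤ (Real.cosh (2 * s) ^ 2 + Real.cot (Real.pi * m / α) ^ 2) ^ (l + 1) :=
            pow_le_pow_left₀ (by positivity) hc2 _
        _ ≤ ((l : ℝ) + 1) * (Real.cosh (2 * s) ^ 2 + Real.cot (Real.pi * m / α) ^ 2) ^ (l + 1) :=
            le_mul_of_one_le_left (by positivity) hml
    have hs0 : (0:ℝ) ≤ Real.sinh (2*s) ^ (2*(l+1)) := by rw [pow_mul]; positivity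
    calc Real.sinh (2 * s) ^ (2 * (l + 1)) /
            (((l : ℝ) + 1) * (Real.cosh (2 * s) ^ 2 + Real.cot (Real.pi * m / α) ^ 2) ^ (l + 1))
        ≤ Real.sinh (2 * s) ^ (2 * (l + 1)) / (Real.cosh (2*s) ^ 2) ^ (l+1) :=
          div_le_div_of_nonneg_left hs0 hd1 hd2
      _ = (Real.tanh (2*s) ^ 2) ^ (l+1) := by
          rw [pow_mul, Real.tanh_eq_sinh_div_cosh, div_pow, div_pow]
  calc _ ≤ (Real.tanh (2*s) ^ 2) ^ (l+1) +
        ∑ _m ∈ Finset.Icc 1 ((α-1)/2), (Real.tanh (2*s) ^ 2) ^ (l+1) :=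
        add_le_add h1 (Finset.sum_le_sum h2)
    _ = (((α - 1) / 2 : ℕ) + 1) * (Real.tanh (2 * s) ^ 2) ^ (l + 1) := by
        rw [Finset.sum_const, Nat.card_Icc, nsmul_eq_mul]
        push_cast
        ring

lemma term_bound (α : ℕ) {r : ℝ} (hr : r ∈ Set.Icc (0:ℝ) 1) (l : ℕ) (s : ℝ) :
    |termT α r l s| ≤ (((α - 1) / 2 : ℕ) + 1) * (32 * Real.tanh (2 * s) ^ 2) ^ (l + 1) := by
  rw [termT, abs_mul]
  have hc0 := coef_nonneg α l s
  have hcle := coef_le α l s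
  have hG := Gbound (Nat.le_add_left 1 l) hr
  calc _ ≤ ((((α - 1) / 2 : ℕ) : ℝ) + 1) * (Real.tanh (2 * s) ^ 2) ^ (l + 1) * 32 ^ (l+1) := by
        refine mul_le_mul ?_ hG (abs_nonneg _) (by positivity)
        rw [abs_of_nonneg hc0]; exact hcle
    _ = (((α - 1) / 2 : ℕ) + 1) * (32 * Real.tanh (2 * s) ^ 2) ^ (l + 1) := by
        rw [mul_pow]; ring

lemma lim_sinh_div : Tendsto (fun s : ℝ => Real.sinh (2*s) / s) (𝓝[≠] (0:ℝ)) (𝓝 2) := by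
  have h1 : Tendsto (fun y : ℝ => Real.sinh y / y) (𝓝[≠] (0:ℝ)) (𝓝 1) := by
    have h := Real.hasDerivAt_sinh 0
    rw [hasDerivAt_iff_tendsto_slope] at h
    simpa [slope_fun_def, Real.sinh_zero, Real.cosh_zero, div_eq_inv_mul] using h
  have hmap : Tendsto (fun s : ℝ => 2*s) (𝓝[≠] (0:ℝ)) (𝓝[≠] (0:ℝ)) := by
    rw [tendsto_nhdsWithin_iff]
    constructor
    · have : Tendsto (fun s : ℝ => 2*s) (𝓝 (0:ℝ)) (𝓝 (2*0)) :=
        (continuous_const.mul continuous_id).tendsto 0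
      simpa using this.mono_left nhdsWithin_le_nhds
    · filter_upwards [self_mem_nhdsWithin] with s hs
      simp only [Set.mem_compl_iff, Set.mem_singleton_iff] at *
      exact mul_ne_zero two_ne_zero hs
  have h2 : Tendsto (fun s : ℝ => Real.sinh (2*s) / (2*s)) (𝓝[≠] (0:ℝ)) (𝓝 1) := h1.comp hmap
  have h3 : Tendsto (fun s : ℝ => 2 * (Real.sinh (2*s) / (2*s))) (𝓝[≠] (0:ℝ)) (𝓝 2) := by
    simpa using h2.const_mul 2
  refine h3.congr' ?_
  filter_upwards [self_mem_nhdsWithin] with s hs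
  simp only [Set.mem_compl_iff, Set.mem_singleton_iff] at hs
  field_simp

lemma lim_sinh_sq : Tendsto (fun s : ℝ => Real.sinh (2*s)^2 / s^2) (𝓝[≠] (0:ℝ)) (𝓝 4) := by
  have := lim_sinh_div.pow 2
  norm_num at this
  refine this.congr fun s => ?_
  rw [div_pow]

lemma lim_cosh_sq : Tendsto (fun s : ℝ => Real.cosh (2*s)^2) (𝓝[≠] (0:ℝ)) (𝓝 1) := by
  have : Continuous (fun s : ℝ => Real.cosh (2*s)^2) := by continuity
  have h := this.tendsto 0
  norm_num at h
  exact h.mono_left nhdsWithin_le_nhds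

lemma lim_tanh_sq : Tendsto (fun s : ℝ => Real.tanh (2*s)^2 / s^2) (𝓝[≠] (0:ℝ)) (𝓝 4) := by
  have h := lim_sinh_sq.div lim_cosh_sq one_ne_zero
  norm_num at h
  refine h.congr fun s => ?_
  simp only [Pi.div_apply]
  rw [Real.tanh_eq_sinh_div_cosh, div_pow, div_div, div_div, mul_comm (s^2)]

lemma lim_tanh0 : Tendsto (fun s : ℝ => Real.tanh (2*s)^2) (𝓝[≠] (0:ℝ)) (𝓝 0) := by
  have : Continuous (fun s : ℝ => Real.tanh (2*s)^2) := by
    have ht : Continuous Real.tanh := by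
      have : Real.tanh = fun x => Real.sinh x / Real.cosh x :=
        funext Real.tanh_eq_sinh_div_cosh
      rw [this]
      exact Real.continuous_sinh.div Real.continuous_cosh fun x => (Real.cosh_pos x).ne'
    fun_prop
  have h := this.tendsto 0
  norm_num at h
  exact h.mono_left nhdsWithin_le_nhds

lemma key_s (α : ℕ) {r : ℝ} (hr : r ∈ Set.Icc (0:ℝ) 1) (s : ℝ)
    (hq : 32 * Real.tanh (2*s)^2 ≤ 1/2) :
    Summable (fun l => termT α r l s) ∧
      |∑' l : ℕ, termT α r (l+1) s|
        ≤ ((((α - 1) / 2 : ℕ) : ℝ) + 1) * 2 * (32 * Real.tanh (2*s)^2)^2 := by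
  set A : ℝ := (((α - 1) / 2 : ℕ) : ℝ) + 1 with hA
  set q : ℝ := 32 * Real.tanh (2*s)^2 with hq'
  have hA0 : (0:ℝ) < A := by positivity
  have hq0 : 0 ≤ q := by positivity
  have hq1 : q < 1 := by linarith
  have hb : ∀ l : ℕ, |termT α r l s| ≤ A * q ^ (l+1) := fun l => term_bound α hr l s
  have hgeom : Summable (fun l : ℕ => A * q ^ (l+1)) := by
    have h := summable_geometric_of_lt_one hq0 hq1
    exact (((summable_nat_add_iff 1).mpr h).mul_left A)
  have hsum : Summable (fun l => termT α r l s) := by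
    refine Summable.of_norm_bounded hgeom fun l => ?_
    rw [Real.norm_eq_abs]; exact hb l
  refine ⟨hsum, ?_⟩
  have habs : Summable (fun l => |termT α r l s|) := hsum.abs
  have habs1 : Summable (fun l => |termT α r (l+1) s|) := (summable_nat_add_iff 1).mpr habs
  have hgeom2 : Summable (fun l : ℕ => A * q ^ (l+2)) := by
    have h := summable_geometric_of_lt_one hq0 hq1
    exact (((summable_nat_add_iff 2).mpr h).mul_left A)
  have h1 : |∑' l : ℕ, termT α r (l+1) s| ≤ ∑' l : ℕ, |termT α r (l+1) s| := by
    simpa [Real.norm_eq_abs] using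
      norm_tsum_le_tsum_norm (f := fun l : ℕ => termT α r (l+1) s)
        (by simpa [Real.norm_eq_abs] using habs1)
  have h2 : ∑' l : ℕ, |termT α r (l+1) s| ≤ ∑' l : ℕ, A * q ^ (l+2) :=
    Summable.tsum_le_tsum (fun l => hb (l+1)) habs1 hgeom2
  have h3 : ∑' l : ℕ, A * q ^ (l+2) = A * q^2 * (1 - q)⁻¹ := by
    have : ∀ l : ℕ, A * q ^ (l+2) = (A * q^2) * q^l := by
      intro l; rw [pow_add]; ring
    rw [tsum_congr this, tsum_mul_left, tsum_geometric_of_lt_one hq0 hq1]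
  have h4 : (1 - q)⁻¹ ≤ 2 := by
    rw [show (2:ℝ) = (1/2)⁻¹ by norm_num]
    exact inv_anti₀ (by norm_num) (by linarith)
  calc |∑' l : ℕ, termT α r (l+1) s| ≤ A * q^2 * (1-q)⁻¹ := by
        rw [← h3]; exact h1.trans h2
    _ ≤ A * q^2 * 2 := by
        refine mul_le_mul_of_nonneg_left h4 (by positivity)
    _ = A * 2 * q^2 := by ring

lemma head_lim (α : ℕ) (hα : 2 ≤ α) (r : ℝ) :
    Tendsto (fun s : ℝ => termT α r 0 s / s^2) (𝓝[≠] (0:ℝ))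
      (𝓝 ((α : ℝ) * (r * (1 - r)))) := by
  have hα0 : (0:ℝ) < α := by positivity
  have hrw : ∀ s : ℝ, termT α r 0 s / s^2 =
      ((if Even α then (1:ℝ) else 0) * (Real.tanh (2*s)^2 / s^2) / 2 +
        ∑ m ∈ Finset.Icc 1 ((α-1)/2),
          (Real.sinh (2*s)^2 / s^2) / (Real.cosh (2*s)^2 + Real.cot (Real.pi * m / α)^2))
        * (r - r^2) := by
    intro s
    have hmm : ∀ m : ℕ, Real.sinh (2*s) ^ (2*(0+1)) /
        ((((0:ℕ):ℝ)+1) * (Real.cosh (2*s)^2 + Real.cot (Real.pi*m/α)^2) ^ (0+1))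
        = Real.sinh (2*s)^2 / (Real.cosh (2*s)^2 + Real.cot (Real.pi*m/α)^2) := by
      intro m; norm_num
    have hzz : (if Even α then (1:ℝ) else 0) * Real.tanh (2*s) ^ (2*(0+1)) / (2*(((0:ℕ):ℝ)+1))
        = (if Even α then (1:ℝ) else 0) * Real.tanh (2*s)^2 / 2 := by norm_num
    rw [termT, G1, Finset.sum_congr rfl (fun m _ => hmm m), hzz, mul_div_right_comm]
    congr 1
    rw [add_div, Finset.sum_div]
    congr 1
    · ring
    · exact Finset.sum_congr rfl fun m _ => div_right_comm _ _ _
  have hζ : Tendsto (fun s : ℝ => (if Even α then (1:ℝ) else 0) * (Real.tanh (2*s)^2/s^2)/2)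
      (𝓝[≠] (0:ℝ)) (𝓝 ((if Even α then (1:ℝ) else 0) * 4 / 2)) :=
    (lim_tanh_sq.const_mul _).div_const 2
  have hS : Tendsto (fun s : ℝ => ∑ m ∈ Finset.Icc 1 ((α-1)/2),
      (Real.sinh (2*s)^2 / s^2) / (Real.cosh (2*s)^2 + Real.cot (Real.pi * m / α)^2))
      (𝓝[≠] (0:ℝ))
      (𝓝 (∑ m ∈ Finset.Icc 1 ((α-1)/2), 4 / (1 + Real.cot (Real.pi * m / α)^2))) := by
    refine tendsto_finset_sum _ fun m _ => ?_
    have hc : (0:ℝ) < 1 + Real.cot (Real.pi * m / α)^2 := by positivity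
    exact lim_sinh_sq.div (lim_cosh_sq.add_const _) hc.ne'
  have htot := (hζ.add hS).mul_const (r - r^2)
  have hval : ((if Even α then (1:ℝ) else 0) * 4 / 2 +
      ∑ m ∈ Finset.Icc 1 ((α-1)/2), 4 / (1 + Real.cot (Real.pi * m / α)^2)) * (r - r^2)
      = (α : ℝ) * (r * (1 - r)) := by
    have hident : ∀ m ∈ Finset.Icc 1 ((α-1)/2),
        4 / (1 + Real.cot (Real.pi * m / α)^2) = 4 * Real.sin (Real.pi * m / α)^2 := by
      intro m hm
      rw [Finset.mem_Icc] at hm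
      set θ := Real.pi * m / α with hθ
      have hm1 : (1:ℝ) ≤ m := by exact_mod_cast hm.1
      have hmα : (m:ℝ) < α := by exact_mod_cast (by omega : m < α)
      have hθ0 : 0 < θ := by
        rw [hθ]
        have := Real.pi_pos
        positivity
      have hθπ : θ < Real.pi := by
        rw [hθ, div_lt_iff₀ hα0]
        have := Real.pi_pos
        nlinarith
      have hsin := Real.sin_pos_of_pos_of_lt_pi hθ0 hθπ
      have hpyth := Real.sin_sq_add_cos_sq θ
      rw [Real.cot_eq_cos_div_sin, div_pow]
      rw [show 1 + Real.cos θ^2 / Real.sin θ^2 = 1 / Real.sin θ^2 by field_simp; exact hpyth]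
      field_simp
    rw [Finset.sum_congr rfl hident, ← Finset.mul_sum]
    have hss := sin_sq_sum α hα
    set S := ∑ m ∈ Finset.Icc 1 ((α-1)/2), Real.sin (Real.pi * m / α) ^ 2 with hS'
    calc ((if Even α then (1:ℝ) else 0) * 4 / 2 + 4 * S) * (r - r^2)
        = ((if Even α then (1:ℝ) else 0) * 2 + 4 * S) * (r - r^2) := by ring
      _ = (α : ℝ) * (r * (1 - r)) := by rw [hss]; ring
  rw [hval] at htot
  exact htot.congr fun s => (hrw s).symm

lemma PhiA_eq (α : ℕ) (s r : ℝ) :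
    PhiA α s r = (1 / ((α : ℝ) - 1)) * ∑' l : ℕ, termT α r l s := rfl

end AuxProof

/-- For every integer `α ≥ 2` and every fixed `r ∈ [0,1]`, the asymptotic
Rényi-α Page curve satisfies `lim_{s→0} Φ_α(s,r)/s² = (α/(α−1))·r(1−r)`. -/
theorem renyi_page_curve_small_squeezing_limit (α : ℕ) (hα : 2 ≤ α) (r : ℝ)
    (hr : r ∈ Set.Icc (0 : ℝ) 1) :
    Tendsto (fun s : ℝ => PhiA α s r / s ^ 2) (𝓝[≠] (0 : ℝ))
      (nhds (((α : ℝ) / ((α : ℝ) - 1)) * (r * (1 - r)))) := by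
  have hα2 : (2:ℝ) ≤ (α:ℝ) := by exact_mod_cast hα
  have hα1 : ((α:ℝ) - 1) ≠ 0 := by linarith
  set A : ℝ := (((α - 1) / 2 : ℕ) : ℝ) + 1 with hA
  have hA0 : (0:ℝ) < A := by positivity
  -- eventually small
  have hev : ∀ᶠ s in 𝓝[≠] (0:ℝ), 32 * Real.tanh (2*s)^2 ≤ 1/2 := by
    have h := lim_tanh0.eventually (eventually_lt_nhds (show (0:ℝ) < 1/64 by norm_num))
    filter_upwards [h] with s hs
    nlinarith [hs]
  -- decomposition
  have hdecomp : ∀ᶠ s in 𝓝[≠] (0:ℝ), PhiA α s r / s^2 =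
      (1/((α:ℝ)-1)) * (termT α r 0 s / s^2)
        + (1/((α:ℝ)-1)) * ((∑' l : ℕ, termT α r (l+1) s) / s^2) := by
    filter_upwards [hev] with s hq
    have hsum := (key_s α hr s hq).1
    rw [PhiA_eq, Summable.tsum_eq_zero_add hsum]
    ring
  -- head limit
  have hhead : Tendsto (fun s : ℝ => (1/((α:ℝ)-1)) * (termT α r 0 s / s^2)) (𝓝[≠] (0:ℝ))
      (𝓝 ((1/((α:ℝ)-1)) * ((α:ℝ) * (r * (1 - r))))) :=
    (head_lim α hα r).const_mul _
  -- tail limit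
  have htail : Tendsto (fun s : ℝ => (1/((α:ℝ)-1)) * ((∑' l : ℕ, termT α r (l+1) s) / s^2))
      (𝓝[≠] (0:ℝ)) (𝓝 0) := by
    set g : ℝ → ℝ := fun s => |1/((α:ℝ)-1)| * (A * 2 * 1024 *
      ((Real.tanh (2*s)^2 / s^2) * Real.tanh (2*s)^2)) with hg
    have hg0 : Tendsto g (𝓝[≠] (0:ℝ)) (𝓝 0) := by
      have := (lim_tanh_sq.mul lim_tanh0).const_mul (|1/((α:ℝ)-1)| * (A * 2 * 1024))
      simpa [hg, mul_assoc] using this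
    refine squeeze_zero_norm' ?_ hg0
    filter_upwards [hev, self_mem_nhdsWithin] with s hq hs
    simp only [Set.mem_compl_iff, Set.mem_singleton_iff] at hs
    have hs2 : (0:ℝ) < s^2 := by positivity
    have hkey := (key_s α hr s hq).2
    have habs : ‖(1/((α:ℝ)-1)) * ((∑' l : ℕ, termT α r (l+1) s) / s^2)‖
        = |1/((α:ℝ)-1)| * (|∑' l : ℕ, termT α r (l+1) s| / s^2) := by
      rw [Real.norm_eq_abs, abs_mul]
      congr 1
      rw [abs_div, abs_of_nonneg hs2.le]
    rw [habs]
    have hdiv : |∑' l : ℕ, termT α r (l+1) s| / s^2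
        ≤ (A * 2 * (32 * Real.tanh (2*s)^2)^2) / s^2 :=
      div_le_div_of_nonneg_right hkey hs2.le
    calc |1/((α:ℝ)-1)| * (|∑' l : ℕ, termT α r (l+1) s| / s^2)
        ≤ |1/((α:ℝ)-1)| * ((A * 2 * (32 * Real.tanh (2*s)^2)^2) / s^2) :=
          mul_le_mul_of_nonneg_left hdiv (abs_nonneg _)
      _ = g s := by rw [hg]; field_simp; ring
  have hfinal := hhead.add htail
  rw [show (1/((α:ℝ)-1)) * ((α:ℝ) * (r * (1 - r))) + 0
      = ((α : ℝ) / ((α : ℝ) - 1)) * (r * (1 - r)) by field_simp; ring] at hfinal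
  exact Tendsto.congr' (hdecomp.mono fun s hs => hs.symm) hfinal

end
end

section
/- For every integer α ≥ 2 and every fixed r ∈ [0,1], the asymptotic Rényi-α Page curve satisfies lim_{s→∞} Φ_α(s,r)/s = 2·min(r, 1−r). -/
open scoped BigOperators Topology ENNReal
open MeasureTheory Filter Real Matrix

noncomputable section

/-- auxiliary: the summand coefficient in `Gfun` -/
def bt (i t : ℕ) : ℝ := rf (1 - i) t * rf i t / (rf (2 + i) t * (Nat.factorial t))

lemma rf_zero (x : ℝ) : rf x 0 = 1 := by simp [rf]
lemma rf_succ (x : ℝ) (t : ℕ) : rf x (t+1) = rf x t * (x + t) := by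
  simp [rf, Finset.prod_range_succ]

lemma rf_cast (m t : ℕ) : rf ((m:ℝ)+1) t * (Nat.factorial m : ℝ) = (Nat.factorial (m+t) : ℝ) := by
  induction t with
  | zero => simp [rf_zero]
  | succ t ih =>
      rw [rf_succ, show m + (t+1) = (m+t)+1 by ring, Nat.factorial_succ]
      push_cast
      nlinarith [ih]

lemma rf_neg_cast (m t : ℕ) (h : t ≤ m) :
    rf (-(m:ℝ)) t * (Nat.factorial (m - t) : ℝ) = (-1)^t * (Nat.factorial m : ℝ) := by
  induction t with
  | zero => simp [rf_zero]
  | succ t ih =>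
      have ht : t ≤ m := Nat.le_of_succ_le h
      have h1 : -(m:ℝ) + t = -(((m - t : ℕ)):ℝ) := by
        push_cast [Nat.cast_sub ht]; ring
      rw [rf_succ, h1]
      have h2 : m - t = (m - (t+1)) + 1 := by omega
      have ih' := ih ht
      rw [h2, Nat.factorial_succ] at ih'
      push_cast [h2] at ih' ⊢
      rw [pow_succ]
      linear_combination -ih'

lemma rf_neg_zero (m t : ℕ) (h : m < t) : rf (-(m:ℝ)) t = 0 := by
  apply Finset.prod_eq_zero (Finset.mem_range.mpr h)
  simp

lemma catR_eq (i : ℕ) : catR i = (catalan i : ℝ) := by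
  have h2 : (2*i).choose i = (i+1) * catalan i := by
    rw [succ_mul_catalan_eq_centralBinom]; rfl
  rw [catR, h2]
  push_cast
  have : ((i:ℝ)+1) ≠ 0 := by positivity
  field_simp

lemma rf_pos_div (m t : ℕ) : rf ((m:ℝ)+1) t = ((m+t).factorial : ℝ) / (m.factorial : ℝ) := by
  have h := rf_cast m t
  have h1 : (m.factorial : ℝ) ≠ 0 := by positivity
  field_simp
  linarith [h]

lemma rf_neg_div (m t : ℕ) (h : t ≤ m) :
    rf (-(m:ℝ)) t = (-1)^t * (m.factorial : ℝ) / ((m-t).factorial : ℝ) := by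
  have h0 := rf_neg_cast m t h
  have h1 : (((m-t).factorial : ℕ) : ℝ) ≠ 0 := by positivity
  field_simp
  linarith [h0]


lemma catR_fac (i : ℕ) : catR i =
    ((2*i).factorial : ℝ) / ((i.factorial : ℝ) * i.factorial * ((i:ℝ)+1)) := by
  rw [catR, Nat.cast_choose ℝ (show i ≤ 2*i by omega), show 2*i - i = i by omega]
  have h1 : (i.factorial : ℝ) ≠ 0 := by positivity
  have h2 : ((i:ℝ)+1) ≠ 0 := by positivity
  field_simp


set_option maxHeartbeats 2000000 in
lemma keyA (s d : ℕ) :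
    catR (s+d+2) * bt (s+d+2) (s+1) =
      catR (s+d+3) * bt (s+d+3) s +
        catR (s+d+2) * (-1)^(s+1) * (((s+d+3).choose (s+1) : ℕ) : ℝ) := by
  unfold bt
  -- rewrite the rf values
  have e1 : (1 : ℝ) - ((s+d+2 : ℕ):ℝ) = -(((s+d+1 : ℕ)):ℝ) := by push_cast; ring
  have e2 : ((s+d+2 : ℕ):ℝ) = ((s+d+1 : ℕ):ℝ) + 1 := by push_cast; ring
  have e3 : (2 : ℝ) + ((s+d+2 : ℕ):ℝ) = ((s+d+3 : ℕ):ℝ) + 1 := by push_cast; ring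
  have e4 : (1 : ℝ) - ((s+d+3 : ℕ):ℝ) = -(((s+d+2 : ℕ)):ℝ) := by push_cast; ring
  have e5 : ((s+d+3 : ℕ):ℝ) = ((s+d+2 : ℕ):ℝ) + 1 := by push_cast; ring
  have e6 : (2 : ℝ) + ((s+d+3 : ℕ):ℝ) = ((s+d+4 : ℕ):ℝ) + 1 := by push_cast; ring
  rw [e1, e4]
  rw [rf_neg_div (s+d+1) (s+1) (by omega), rf_neg_div (s+d+2) s (by omega)]
  rw [show (s+d+1) - (s+1) = d from by omega, show (s+d+2) - s = d+2 from by omega]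
  rw [e3, rf_pos_div (s+d+3) (s+1)]
  rw [e6, rf_pos_div (s+d+4) s]
  rw [e2, rf_pos_div (s+d+1) (s+1)]
  rw [e5, rf_pos_div (s+d+2) s]
  rw [show (s+d+1) + (s+1) = 2*s+d+2 from by omega,
      show (s+d+3) + (s+1) = 2*s+d+4 from by omega,
      show (s+d+2) + s = 2*s+d+2 from by omega,
      show (s+d+4) + s = 2*s+d+4 from by omega]
  rw [catR_fac (s+d+2), catR_fac (s+d+3)]
  rw [Nat.cast_choose ℝ (show s+1 ≤ s+d+3 by omega), show (s+d+3) - (s+1) = d+2 from by omega]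
  rw [show 2*(s+d+2) = 2*s+2*d+4 from by omega, show 2*(s+d+3) = 2*s+2*d+6 from by omega]
  -- expand factorials down to atoms: s!, d!, (s+d+1)!, (2*s+d+2)!, (2*s+2*d+4)!
  have g1 : ((s+1).factorial : ℝ) = ((s:ℝ)+1) * (s.factorial : ℝ) := by
    rw [Nat.factorial_succ]; push_cast; ring
  have g2 : ((d+2).factorial : ℝ) = ((d:ℝ)+2)*((d:ℝ)+1)*(d.factorial : ℝ) := by
    rw [show d+2 = (d+1)+1 from rfl, Nat.factorial_succ, Nat.factorial_succ]; push_cast; ring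
  have g3 : ((s+d+2).factorial : ℝ) = ((s:ℝ)+d+2) * ((s+d+1).factorial : ℝ) := by
    rw [show s+d+2 = (s+d+1)+1 from rfl, Nat.factorial_succ]; push_cast; ring
  have g4 : ((s+d+3).factorial : ℝ) = ((s:ℝ)+d+3)*((s:ℝ)+d+2) * ((s+d+1).factorial : ℝ) := by
    rw [show s+d+3 = (s+d+2)+1 from rfl, Nat.factorial_succ]; push_cast; rw [g3]; push_cast; ring
  have g4' : ((s+d+4).factorial : ℝ) = ((s:ℝ)+d+4)*((s:ℝ)+d+3)*((s:ℝ)+d+2) * ((s+d+1).factorial : ℝ) := by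
    rw [show s+d+4 = (s+d+3)+1 from rfl, Nat.factorial_succ]; push_cast; rw [g4]; push_cast; ring
  have g5 : ((2*s+d+4).factorial : ℝ) = (2*(s:ℝ)+d+4)*(2*(s:ℝ)+d+3) * ((2*s+d+2).factorial : ℝ) := by
    rw [show 2*s+d+4 = (2*s+d+3)+1 from rfl, Nat.factorial_succ,
        show 2*s+d+3 = (2*s+d+2)+1 from rfl, Nat.factorial_succ]; push_cast; ring
  have g6 : ((2*s+2*d+6).factorial : ℝ) = (2*(s:ℝ)+2*d+6)*(2*(s:ℝ)+2*d+5) * ((2*s+2*d+4).factorial : ℝ) := by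
    rw [show 2*s+2*d+6 = (2*s+2*d+5)+1 from rfl, Nat.factorial_succ,
        show 2*s+2*d+5 = (2*s+2*d+4)+1 from rfl, Nat.factorial_succ]; push_cast; ring
  rw [g1, g2, g3, g4, g4', g5, g6]
  have n1 : (s.factorial : ℝ) ≠ 0 := by positivity
  have n2 : (d.factorial : ℝ) ≠ 0 := by positivity
  have n3 : ((s+d+1).factorial : ℝ) ≠ 0 := by positivity
  have n4 : ((2*s+d+2).factorial : ℝ) ≠ 0 := by positivity
  have n5 : ((2*s+2*d+4).factorial : ℝ) ≠ 0 := by positivity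
  have p1 : ((s:ℝ)+1) ≠ 0 := by positivity
  have p2 : ((d:ℝ)+1) ≠ 0 := by positivity
  have p3 : ((d:ℝ)+2) ≠ 0 := by positivity
  have p4 : ((s:ℝ)+d+2) ≠ 0 := by positivity
  have p5 : ((s:ℝ)+d+3) ≠ 0 := by positivity
  have p6 : ((s:ℝ)+d+4) ≠ 0 := by positivity
  have p7 : (2*(s:ℝ)+d+3) ≠ 0 := by positivity
  have p8 : (2*(s:ℝ)+d+4) ≠ 0 := by positivity
  have p9 : (2*(s:ℝ)+2*d+5) ≠ 0 := by positivity
  have p10 : (2*(s:ℝ)+2*d+6) ≠ 0 := by positivity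
  push_cast
  field_simp
  ring

set_option maxHeartbeats 1000000 in
lemma keyB (s : ℕ) :
    catR (s+1) * bt (s+1) (s+1) =
      catR (s+2) * bt (s+2) s + catR (s+1) * (-1)^(s+1) * (((s+2).choose (s+1) : ℕ) : ℝ) := by
  unfold bt
  have e1 : (1 : ℝ) - ((s+1 : ℕ):ℝ) = -((s : ℕ):ℝ) := by push_cast; ring
  have e4 : (1 : ℝ) - ((s+2 : ℕ):ℝ) = -(((s+1 : ℕ)):ℝ) := by push_cast; ring
  rw [e1, rf_neg_zero s (s+1) (by omega)]
  rw [e4, rf_neg_div (s+1) s (by omega), show (s+1) - s = 1 from by omega]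
  have e5 : ((s+2 : ℕ):ℝ) = ((s+1 : ℕ):ℝ) + 1 := by push_cast; ring
  have e6 : (2 : ℝ) + ((s+2 : ℕ):ℝ) = ((s+3 : ℕ):ℝ) + 1 := by push_cast; ring
  rw [e6, rf_pos_div (s+3) s, e5, rf_pos_div (s+1) s]
  rw [show (s+1) + s = 2*s+1 from by omega, show (s+3) + s = 2*s+3 from by omega]
  rw [catR_fac (s+1), catR_fac (s+2)]
  rw [Nat.cast_choose ℝ (show s+1 ≤ s+2 by omega), show (s+2) - (s+1) = 1 from by omega]
  rw [show 2*(s+1) = 2*s+2 from by omega, show 2*(s+2) = 2*s+4 from by omega]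
  have g1 : ((s+1).factorial : ℝ) = ((s:ℝ)+1) * (s.factorial : ℝ) := by
    rw [Nat.factorial_succ]; push_cast; ring
  have g2 : ((s+2).factorial : ℝ) = ((s:ℝ)+2)*((s:ℝ)+1) * (s.factorial : ℝ) := by
    rw [show s+2 = (s+1)+1 from rfl, Nat.factorial_succ]; push_cast; rw [g1]; ring
  have g3 : ((s+3).factorial : ℝ) = ((s:ℝ)+3)*((s:ℝ)+2)*((s:ℝ)+1) * (s.factorial : ℝ) := by
    rw [show s+3 = (s+2)+1 from rfl, Nat.factorial_succ]; push_cast; rw [g2]; ring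
  have g4 : ((2*s+2).factorial : ℝ) = (2*(s:ℝ)+2) * ((2*s+1).factorial : ℝ) := by
    rw [show 2*s+2 = (2*s+1)+1 from rfl, Nat.factorial_succ]; push_cast; ring
  have g5 : ((2*s+3).factorial : ℝ) = (2*(s:ℝ)+3)*(2*(s:ℝ)+2) * ((2*s+1).factorial : ℝ) := by
    rw [show 2*s+3 = (2*s+2)+1 from rfl, Nat.factorial_succ]; push_cast; rw [g4]; ring
  have g6 : ((2*s+4).factorial : ℝ) = (2*(s:ℝ)+4)*(2*(s:ℝ)+3)*(2*(s:ℝ)+2) * ((2*s+1).factorial : ℝ) := by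
    rw [show 2*s+4 = (2*s+3)+1 from rfl, Nat.factorial_succ]; push_cast; rw [g5]; ring
  rw [g1, g2, g3, g4, g5, g6]
  have n1 : (s.factorial : ℝ) ≠ 0 := by positivity
  have n2 : ((2*s+1).factorial : ℝ) ≠ 0 := by positivity
  have p1 : ((s:ℝ)+1) ≠ 0 := by positivity
  have p2 : ((s:ℝ)+2) ≠ 0 := by positivity
  have p3 : ((s:ℝ)+3) ≠ 0 := by positivity
  have p4 : (2*(s:ℝ)+2) ≠ 0 := by positivity
  have p5 : (2*(s:ℝ)+3) ≠ 0 := by positivity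
  have p6 : (2*(s:ℝ)+4) ≠ 0 := by positivity
  push_cast
  rw [Nat.factorial_one]
  field_simp
  ring


set_option maxHeartbeats 1000000 in
lemma keyC (j : ℕ) :
    catR (j+1) * bt (j+1) (j+2) =
      catR (j+2) * bt (j+2) (j+1) + catR (j+1) * (-1)^(j+2) * 1 := by
  unfold bt
  have e1 : (1 : ℝ) - ((j+1 : ℕ):ℝ) = -((j : ℕ):ℝ) := by push_cast; ring
  have e4 : (1 : ℝ) - ((j+2 : ℕ):ℝ) = -(((j+1 : ℕ)):ℝ) := by push_cast; ring
  rw [e1, rf_neg_zero j (j+2) (by omega)]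
  rw [e4, rf_neg_div (j+1) (j+1) (by omega), show (j+1) - (j+1) = 0 from by omega]
  have e5 : ((j+2 : ℕ):ℝ) = ((j+1 : ℕ):ℝ) + 1 := by push_cast; ring
  have e6 : (2 : ℝ) + ((j+2 : ℕ):ℝ) = ((j+3 : ℕ):ℝ) + 1 := by push_cast; ring
  rw [e6, rf_pos_div (j+3) (j+1), e5, rf_pos_div (j+1) (j+1)]
  rw [show (j+1) + (j+1) = 2*j+2 from by omega, show (j+3) + (j+1) = 2*j+4 from by omega]
  rw [catR_fac (j+1), catR_fac (j+2)]
  rw [show 2*(j+1) = 2*j+2 from by omega, show 2*(j+2) = 2*j+4 from by omega]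
  have g2 : ((j+2).factorial : ℝ) = ((j:ℝ)+2)*((j+1).factorial : ℝ) := by
    rw [show j+2 = (j+1)+1 from rfl, Nat.factorial_succ]; push_cast; ring
  have g3 : ((j+3).factorial : ℝ) = ((j:ℝ)+3)*((j:ℝ)+2)*((j+1).factorial : ℝ) := by
    rw [show j+3 = (j+2)+1 from rfl, Nat.factorial_succ]; push_cast; rw [g2]; push_cast; ring
  have g6 : ((2*j+4).factorial : ℝ) = (2*(j:ℝ)+4)*(2*(j:ℝ)+3) * ((2*j+2).factorial : ℝ) := by
    rw [show 2*j+4 = (2*j+3)+1 from rfl, Nat.factorial_succ,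
        show 2*j+3 = (2*j+2)+1 from rfl, Nat.factorial_succ]; push_cast; ring
  rw [g2, g3, g6]
  have n1 : ((j+1).factorial : ℝ) ≠ 0 := by positivity
  have n2 : ((2*j+2).factorial : ℝ) ≠ 0 := by positivity
  have p1 : ((j:ℝ)+1) ≠ 0 := by positivity
  have p2 : ((j:ℝ)+2) ≠ 0 := by positivity
  have p3 : ((j:ℝ)+3) ≠ 0 := by positivity
  have p4 : (2*(j:ℝ)+3) ≠ 0 := by positivity
  have p5 : (2*(j:ℝ)+4) ≠ 0 := by positivity
  push_cast
  rw [Nat.factorial_zero]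
  field_simp
  ring

lemma bt_zero (i t : ℕ) (hi : 1 ≤ i) (ht : i ≤ t) : bt i t = 0 := by
  have e1 : (1 : ℝ) - (i:ℝ) = -(((i-1 : ℕ)):ℝ) := by
    push_cast [Nat.cast_sub hi]; ring
  rw [bt, e1, rf_neg_zero (i-1) t (by omega)]
  simp

lemma key (i t : ℕ) (hi : 1 ≤ i) (ht : t ≤ i+1) :
    catR i * bt i t =
      (if t = 0 then 0 else catR (i+1) * bt (i+1) (t-1)) +
        catR i * (-1)^t * (((i+1).choose t : ℕ) : ℝ) := by
  rcases t with _ | s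
  · simp [bt, rf_zero]
  · simp only [Nat.succ_ne_zero, if_neg, Nat.add_sub_cancel]
    rcases lt_trichotomy (s+1) i with h | h | h
    · obtain ⟨d, hd⟩ : ∃ d, i = s+d+2 := ⟨i - s - 2, by omega⟩
      subst hd
      exact keyA s d
    · subst h; exact keyB s
    · have hsi : s = i := by omega
      subst hsi
      obtain ⟨j, hj⟩ : ∃ j, s = j+1 := ⟨s-1, by omega⟩
      subst hj
      have := keyC j
      simpa [Nat.choose_self] using this


lemma claim1 (i : ℕ) (hi : 1 ≤ i) (r : ℝ) :
    catR i * (∑ t ∈ Finset.range i, bt i t * r^t) =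
      catR (i+1) * (r * ∑ t ∈ Finset.range (i+1), bt (i+1) t * r^t) +
        catR i * (1-r)^(i+1) := by
  have hL : catR i * (∑ t ∈ Finset.range i, bt i t * r^t) =
      ∑ t ∈ Finset.range (i+2), catR i * bt i t * r^t := by
    rw [Finset.mul_sum]
    rw [Finset.sum_subset (Finset.range_subset_range.mpr (by omega : i ≤ i+2))]
    · exact Finset.sum_congr rfl (fun t _ => by ring)
    · intro t _ ht
      rw [bt_zero i t hi (by simpa using ht)]
      ring
  have hM : catR (i+1) * (r * ∑ t ∈ Finset.range (i+1), bt (i+1) t * r^t) =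
      ∑ t ∈ Finset.range (i+2),
        (if t = 0 then 0 else catR (i+1) * bt (i+1) (t-1)) * r^t := by
    rw [Finset.sum_range_succ' (fun t => (if t = 0 then 0 else catR (i+1) * bt (i+1) (t-1)) * r^t) (i+1)]
    rw [if_pos rfl, zero_mul, add_zero, Finset.mul_sum, Finset.mul_sum]
    exact Finset.sum_congr rfl
      (fun t _ => by rw [if_neg (Nat.succ_ne_zero t), Nat.add_sub_cancel]; ring)
  have hR : catR i * (1-r)^(i+1) =
      ∑ t ∈ Finset.range (i+2), catR i * (-1)^t * (((i+1).choose t : ℕ) : ℝ) * r^t := by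
    have : (1 - r)^(i+1) = ((-r) + 1)^(i+1) := by ring_nf
    rw [this, add_pow, Finset.mul_sum]
    exact Finset.sum_congr rfl (fun t _ => by rw [neg_pow]; ring)
  rw [hL, hM, hR, ← Finset.sum_add_distrib]
  refine Finset.sum_congr rfl (fun t htm => ?_)
  have ht : t ≤ i+1 := by simpa [Nat.lt_succ_iff] using Finset.mem_range.mp htm
  have := key i t hi ht
  calc catR i * bt i t * r^t
      = (catR i * bt i t) * r^t := by ring
    _ = ((if t = 0 then 0 else catR (i+1) * bt (i+1) (t-1)) +
        catR i * (-1)^t * (((i+1).choose t : ℕ) : ℝ)) * r^t := by rw [this]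
    _ = _ := by ring

lemma Gfun_bt (i : ℕ) (r : ℝ) :
    Gfun i r = r - catR i * r^(i+1) * ∑ t ∈ Finset.range i, bt i t * r^t := rfl

lemma Gfun_step (i : ℕ) (hi : 1 ≤ i) (r : ℝ) :
    Gfun (i+1) r = Gfun i r + catR i * (r*(1-r))^(i+1) := by
  rw [Gfun_bt, Gfun_bt]
  have h := claim1 i hi r
  have : catR (i+1) * r^(i+1+1) * ∑ t ∈ Finset.range (i+1), bt (i+1) t * r^t =
      r^(i+1) * (catR (i+1) * (r * ∑ t ∈ Finset.range (i+1), bt (i+1) t * r^t)) := by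
    ring
  rw [this, mul_pow]
  linear_combination (r^(i+1)) * h

lemma Gfun_eq (i : ℕ) (hi : 1 ≤ i) (r : ℝ) :
    Gfun i r = ∑ k ∈ Finset.range i, (catalan k : ℝ) * (r*(1-r))^(k+1) := by
  induction i, hi using Nat.le_induction with
  | base =>
      rw [Gfun_bt]
      have h0 : bt 1 0 = 1 := by simp [bt, rf_zero]
      have h1 : catR 1 = 1 := by norm_num [catR]
      simp [Finset.sum_range_one, h0, h1]
      ring
  | succ i hi ih =>
      rw [Gfun_step i hi r, ih, Finset.sum_range_succ, catR_eq]

lemma conv_upper (x : ℕ → ℝ) (hx : ∀ k, 0 ≤ x k) (N : ℕ) :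
    ∑ n ∈ Finset.range N, ∑ p ∈ Finset.HasAntidiagonal.antidiagonal n, x p.1 * x p.2 ≤
      (∑ k ∈ Finset.range N, x k)^2 := by
  classical
  have hdisj : (Finset.range N : Set ℕ).PairwiseDisjoint Finset.HasAntidiagonal.antidiagonal := by
    intro a _ b _ hab
    simp only [Finset.disjoint_left]
    intro p hpa hpb
    rw [Finset.HasAntidiagonal.mem_antidiagonal] at hpa hpb
    exact hab (hpa ▸ hpb ▸ rfl)
  rw [← Finset.sum_biUnion hdisj, sq, Finset.sum_mul_sum, ← Finset.sum_product']
  apply Finset.sum_le_sum_of_subset_of_nonneg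
  · intro p hp
    simp only [Finset.mem_biUnion] at hp
    obtain ⟨n, hn, hpn⟩ := hp
    rw [Finset.HasAntidiagonal.mem_antidiagonal] at hpn
    rw [Finset.mem_range] at hn
    rw [Finset.mem_product, Finset.mem_range, Finset.mem_range]
    omega
  · intro p _ _
    exact mul_nonneg (hx _) (hx _)

lemma conv_lower (x : ℕ → ℝ) (hx : ∀ k, 0 ≤ x k) (M : ℕ) :
    (∑ k ∈ Finset.range M, x k)^2 ≤
      ∑ n ∈ Finset.range (2*M), ∑ p ∈ Finset.HasAntidiagonal.antidiagonal n, x p.1 * x p.2 := by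
  classical
  have hdisj : (Finset.range (2*M) : Set ℕ).PairwiseDisjoint Finset.HasAntidiagonal.antidiagonal := by
    intro a _ b _ hab
    simp only [Finset.disjoint_left]
    intro p hpa hpb
    rw [Finset.HasAntidiagonal.mem_antidiagonal] at hpa hpb
    exact hab (hpa ▸ hpb ▸ rfl)
  rw [← Finset.sum_biUnion hdisj, sq, Finset.sum_mul_sum, ← Finset.sum_product']
  apply Finset.sum_le_sum_of_subset_of_nonneg
  · intro p hp
    rw [Finset.mem_product, Finset.mem_range, Finset.mem_range] at hp
    simp only [Finset.mem_biUnion]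
    exact ⟨p.1 + p.2, Finset.mem_range.mpr (by omega), Finset.HasAntidiagonal.mem_antidiagonal.mpr rfl⟩
  · intro p _ _
    exact mul_nonneg (hx _) (hx _)

lemma catalan_tendsto (r : ℝ) (hr : r ∈ Set.Icc (0:ℝ) 1) :
    Tendsto (fun N : ℕ => ∑ k ∈ Finset.range N, (catalan k : ℝ) * (r*(1-r))^(k+1))
      atTop (𝓝 (min r (1-r))) := by
  obtain ⟨hr0, hr1⟩ := hr
  set u : ℝ := r * (1-r) with hu
  set L : ℝ := min r (1-r) with hL
  have hL0 : 0 ≤ L := le_min hr0 (by linarith)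
  have hLhalf : L ≤ 1/2 := by
    rcases min_le_iff.mpr (Or.inl (le_refl r)) with _
    rcases le_or_gt r (1-r) with h | h
    · rw [hL, min_eq_left h]; linarith
    · rw [hL, min_eq_right h.le]; linarith
  have hLu : L = u + L^2 := by
    rcases le_or_gt r (1-r) with h | h
    · rw [hL, min_eq_left h]; rw [hu]; ring
    · rw [hL, min_eq_right h.le]; rw [hu]; ring
  set x : ℕ → ℝ := fun k => (catalan k : ℝ) * u^(k+1) with hxdef
  have hu0 : 0 ≤ u := mul_nonneg hr0 (by linarith)
  have hx : ∀ k, 0 ≤ x k := fun k => mul_nonneg (Nat.cast_nonneg _) (pow_nonneg hu0 _)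
  set T : ℕ → ℝ := fun N => ∑ k ∈ Finset.range N, x k with hTdef
  have hx0 : x 0 = u := by simp [hxdef]
  have hxsucc : ∀ n, x (n+1) = ∑ p ∈ Finset.HasAntidiagonal.antidiagonal n, x p.1 * x p.2 := by
    intro n
    simp only [hxdef]
    rw [catalan_succ' n, Nat.cast_sum]
    rw [Finset.sum_mul]
    refine Finset.sum_congr rfl (fun p hp => ?_)
    have hpn : p.1 + p.2 = n := Finset.HasAntidiagonal.mem_antidiagonal.mp hp
    push_cast
    rw [show n + 1 + 1 = (p.1+1) + (p.2+1) by omega, pow_add]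
    ring
  have hTsucc : ∀ N, T (N+1) = u + ∑ n ∈ Finset.range N, ∑ p ∈ Finset.HasAntidiagonal.antidiagonal n, x p.1 * x p.2 := by
    intro N
    simp only [hTdef]
    rw [Finset.sum_range_succ' x N, hx0]
    rw [Finset.sum_congr rfl (fun n _ => hxsucc n)]
    ring
  -- T N ≤ L
  have hTle : ∀ N, T N ≤ L := by
    intro N
    induction N with
    | zero => simpa [hTdef] using hL0
    | succ N ih =>
        have h1 := conv_upper x hx N
        have hTnn : 0 ≤ T N := Finset.sum_nonneg (fun k _ => hx k)
        have : T (N+1) ≤ u + (T N)^2 := by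
          rw [hTsucc N]; nlinarith [h1]
        nlinarith [this, ih, hTnn]
  have hmono : Monotone T := by
    apply monotone_nat_of_le_succ
    intro n
    simp only [hTdef, Finset.sum_range_succ]
    nlinarith [hx n]
  have hbdd : BddAbove (Set.range T) := ⟨L, by rintro y ⟨N, rfl⟩; exact hTle N⟩
  set S : ℝ := ⨆ N, T N with hS
  have hTS : Tendsto T atTop (𝓝 S) := tendsto_atTop_ciSup hmono hbdd
  have hSle : S ≤ L := ciSup_le hTle
  have hS0 : 0 ≤ S := le_ciSup_of_le hbdd 0 (by simp [hTdef])
  -- S ≤ u + S^2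
  have hup : S ≤ u + S^2 := by
    have h1 : Tendsto (fun N => T (N+1)) atTop (𝓝 S) :=
      hTS.comp (tendsto_add_atTop_nat 1)
    have h2 : Tendsto (fun N => u + (T N)^2) atTop (𝓝 (u + S^2)) :=
      (tendsto_const_nhds.add ((hTS.pow 2)))
    refine le_of_tendsto_of_tendsto' h1 h2 (fun N => ?_)
    have := conv_upper x hx N
    rw [hTsucc N]
    nlinarith [this]
  have hlow : u + S^2 ≤ S := by
    have h2M : Tendsto (fun M : ℕ => 2*M+1) atTop atTop :=
      tendsto_atTop_atTop_of_monotone (fun a b h => by omega) (fun b => ⟨b, by omega⟩)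
    have h1 : Tendsto (fun M => T (2*M+1)) atTop (𝓝 S) := hTS.comp h2M
    have h2 : Tendsto (fun M => u + (T M)^2) atTop (𝓝 (u + S^2)) :=
      (tendsto_const_nhds.add ((hTS.pow 2)))
    refine le_of_tendsto_of_tendsto' h2 h1 (fun M => ?_)
    have := conv_lower x hx M
    rw [hTsucc (2*M)]
    nlinarith [this]
  have hSL : S = L := by
    have hq : (L - S) * (1 - S - L) = 0 := by nlinarith [le_antisymm hup hlow, hLu]
    rcases mul_eq_zero.mp hq with h | h
    · linarith
    · nlinarith [hSle, hLhalf]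
  rw [← hSL]
  exact hTS

lemma xval_mem (c s : ℝ) (hc : 0 ≤ c) :
    Real.sinh (2*s)^2 / (Real.cosh (2*s)^2 + c) ∈ Set.Ico (0:ℝ) 1 := by
  have hch : 1 ≤ Real.cosh (2*s) := Real.one_le_cosh (2*s)
  have hd : 0 < Real.cosh (2*s)^2 + c := by nlinarith
  constructor
  · positivity
  · rw [div_lt_one hd]
    nlinarith [Real.cosh_sq_sub_sinh_sq (2*s)]

lemma logM_eq (c s : ℝ) (hc : 0 ≤ c) :
    -Real.log (1 - Real.sinh (2*s)^2 / (Real.cosh (2*s)^2 + c)) =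
      4*s + (2*Real.log (1 + Real.exp (-(4*s))) - 2*Real.log 2 +
        Real.log (1 + c/Real.cosh (2*s)^2) - Real.log (1+c)) := by
  have hch : 1 ≤ Real.cosh (2*s) := Real.one_le_cosh (2*s)
  have hch0 : 0 < Real.cosh (2*s) := by linarith
  have hd : 0 < Real.cosh (2*s)^2 + c := by nlinarith
  have h1 : 1 - Real.sinh (2*s)^2 / (Real.cosh (2*s)^2 + c) =
      (1+c) / (Real.cosh (2*s)^2 + c) := by
    field_simp
    nlinarith [Real.cosh_sq_sub_sinh_sq (2*s)]
  rw [h1, Real.log_div (by positivity) (by positivity)]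
  have h2 : Real.cosh (2*s)^2 + c = Real.cosh (2*s)^2 * (1 + c/Real.cosh (2*s)^2) := by
    field_simp
  rw [h2, Real.log_mul (by positivity) (by positivity), Real.log_pow]
  have h3 : Real.cosh (2*s) = Real.exp (2*s) * (1 + Real.exp (-(4*s))) / 2 := by
    rw [Real.cosh_eq]
    rw [mul_add, mul_one, ← Real.exp_add]
    ring_nf
  rw [h3, Real.log_div (by positivity) (by norm_num),
      Real.log_mul (by positivity) (by positivity), Real.log_exp]
  push_cast
  ring

lemma logM_tendsto (c : ℝ) (hc : 0 ≤ c) :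
    Tendsto (fun s : ℝ =>
      -Real.log (1 - Real.sinh (2*s)^2 / (Real.cosh (2*s)^2 + c)) / s) atTop (𝓝 4) := by
  have hexp : Tendsto (fun s : ℝ => Real.exp (-(4*s))) atTop (𝓝 0) := by
    apply Real.tendsto_exp_atBot.comp
    exact tendsto_neg_atBot_iff.mpr (tendsto_id.const_mul_atTop (by norm_num : (0:ℝ) < 4))
  have hcoshsq : Tendsto (fun s : ℝ => Real.cosh (2*s)^2) atTop atTop := by
    have h0 : Tendsto (fun s : ℝ => Real.exp (2*s) / 2) atTop atTop := by
      apply Tendsto.atTop_div_const (by norm_num : (0:ℝ) < 2)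
      exact Real.tendsto_exp_atTop.comp (tendsto_id.const_mul_atTop (by norm_num : (0:ℝ) < 2))
    have h1 : Tendsto (fun s : ℝ => Real.cosh (2*s)) atTop atTop := by
      apply tendsto_atTop_mono (fun s => ?_) h0
      rw [Real.cosh_eq]
      have := Real.exp_pos (-(2*s))
      gcongr
      linarith
    apply tendsto_atTop_mono (fun s => ?_) h1
    exact le_self_pow₀ (Real.one_le_cosh (2*s)) (by norm_num)
  have hcosh2 : Tendsto (fun s : ℝ => c / Real.cosh (2*s)^2) atTop (𝓝 0) :=
    Tendsto.div_atTop tendsto_const_nhds hcoshsq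
  have l1 : Tendsto (fun s : ℝ => Real.log (1 + Real.exp (-(4*s)))) atTop (𝓝 0) := by
    have h1 : Tendsto (fun s : ℝ => 1 + Real.exp (-(4*s))) atTop (𝓝 (1+0)) :=
      tendsto_const_nhds.add hexp
    have := ((Real.continuousAt_log (by norm_num : (1:ℝ)+0 ≠ 0)).tendsto).comp h1
    simpa [Function.comp_def] using this
  have l2 : Tendsto (fun s : ℝ => Real.log (1 + c / Real.cosh (2*s)^2)) atTop (𝓝 0) := by
    have h1 : Tendsto (fun s : ℝ => 1 + c / Real.cosh (2*s)^2) atTop (𝓝 (1+0)) :=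
      tendsto_const_nhds.add hcosh2
    have := ((Real.continuousAt_log (by norm_num : (1:ℝ)+0 ≠ 0)).tendsto).comp h1
    simpa [Function.comp_def] using this
  have hH : Tendsto (fun s : ℝ => 2*Real.log (1 + Real.exp (-(4*s))) - 2*Real.log 2 +
      Real.log (1 + c/Real.cosh (2*s)^2) - Real.log (1+c)) atTop
      (𝓝 (2*0 - 2*Real.log 2 + 0 - Real.log (1+c))) := by
    exact (((l1.const_mul 2).sub tendsto_const_nhds).add l2).sub tendsto_const_nhds
  have hHs : Tendsto (fun s : ℝ => (2*Real.log (1 + Real.exp (-(4*s))) - 2*Real.log 2 +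
      Real.log (1 + c/Real.cosh (2*s)^2) - Real.log (1+c)) / s) atTop (𝓝 0) :=
    Tendsto.div_atTop hH tendsto_id
  have main : Tendsto (fun s : ℝ => 4 + (2*Real.log (1 + Real.exp (-(4*s))) - 2*Real.log 2 +
      Real.log (1 + c/Real.cosh (2*s)^2) - Real.log (1+c)) / s) atTop (𝓝 (4+0)) :=
    tendsto_const_nhds.add hHs
  rw [show (4:ℝ) = 4 + 0 by norm_num]
  apply main.congr'
  filter_upwards [eventually_ge_atTop (1:ℝ)] with s hs
  have hs0 : s ≠ 0 := by linarith
  rw [logM_eq c s hc]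
  field_simp

lemma abel_main (g : ℕ → ℝ) (L : ℝ) (hg0 : ∀ n, 0 ≤ g n) (hgm : Monotone g)
    (hgL : Tendsto g atTop (𝓝 L)) (x : ℝ → ℝ)
    (hx : ∀ s, x s ∈ Set.Ico (0:ℝ) 1)
    (hM : Tendsto (fun s => -Real.log (1 - x s) / s) atTop (𝓝 4)) :
    Tendsto (fun s : ℝ => (∑' l : ℕ, g (l+1) * (x s)^(l+1) / ((l:ℝ)+1)) / s)
      atTop (𝓝 (4*L)) := by
  have hgle : ∀ n, g n ≤ L := fun n => hgm.ge_of_tendsto hgL n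
  have hL0 : 0 ≤ L := le_trans (hg0 0) (hgle 0)
  -- pointwise facts for X = x s
  have hMsum : ∀ s, HasSum (fun l : ℕ => (x s)^(l+1)/((l:ℝ)+1)) (-Real.log (1 - x s)) := by
    intro s
    have := hasSum_pow_div_log_of_abs_lt_one
      (x := x s) (abs_lt.mpr ⟨by linarith [(hx s).1], (hx s).2⟩)
    exact this
  have hterm_nonneg : ∀ s l, 0 ≤ g (l+1) * (x s)^(l+1) / ((l:ℝ)+1) := by
    intro s l
    have := (hx s).1
    have := hg0 (l+1)
    positivity
  have hterm_le : ∀ s (l : ℕ), g (l+1) * (x s)^(l+1) / ((l:ℝ)+1) ≤ L * ((x s)^(l+1)/((l:ℝ)+1)) := by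
    intro s l
    rw [mul_div_assoc]
    apply mul_le_mul_of_nonneg_right (hgle (l+1))
    have := (hx s).1
    positivity
  have hFsum : ∀ s, Summable (fun l : ℕ => g (l+1) * (x s)^(l+1) / ((l:ℝ)+1)) := by
    intro s
    exact Summable.of_nonneg_of_le (hterm_nonneg s) (hterm_le s) ((hMsum s).summable.mul_left L)
  have hupper : ∀ s, (∑' l : ℕ, g (l+1) * (x s)^(l+1) / ((l:ℝ)+1)) ≤ L * (-Real.log (1 - x s)) := by
    intro s
    calc (∑' l : ℕ, g (l+1) * (x s)^(l+1) / ((l:ℝ)+1))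
        ≤ ∑' l : ℕ, L * ((x s)^(l+1)/((l:ℝ)+1)) :=
          Summable.tsum_le_tsum (hterm_le s) (hFsum s) ((hMsum s).summable.mul_left L)
      _ = L * (-Real.log (1 - x s)) := ((hMsum s).mul_left L).tsum_eq
  have hXpow_le_one : ∀ s (l : ℕ), (x s)^(l+1)/((l:ℝ)+1) ≤ 1 := by
    intro s l
    have h1 : (x s)^(l+1) ≤ 1 := pow_le_one₀ (hx s).1 (hx s).2.le
    have h2 : (0:ℝ) < (l:ℝ)+1 := by positivity
    rw [div_le_one h2]
    have h3 : (1:ℝ) ≤ (l:ℝ)+1 := by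
      have : (0:ℝ) ≤ (l:ℝ) := Nat.cast_nonneg l
      linarith
    linarith
  have hlower : ∀ (N : ℕ), ∀ s, g N * (-Real.log (1 - x s)) - N * L ≤
      (∑' l : ℕ, g (l+1) * (x s)^(l+1) / ((l:ℝ)+1)) := by
    intro N s
    set ψ : ℕ → ℝ := fun l => if l < N then g N * ((x s)^(l+1)/((l:ℝ)+1)) else 0 with hψ
    have hψsum : Summable ψ := summable_of_ne_finset_zero (s := Finset.range N)
      (fun l hl => by simp only [hψ]; rw [if_neg (not_lt.mpr (by simpa using hl))])
    have hψtsum : (∑' l, ψ l) ≤ N * L := by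
      rw [tsum_eq_sum (s := Finset.range N)
        (fun l hl => by simp only [hψ]; rw [if_neg (not_lt.mpr (by simpa using hl))])]
      calc ∑ l ∈ Finset.range N, ψ l ≤ ∑ l ∈ Finset.range N, L := by
            apply Finset.sum_le_sum
            intro l hl
            simp only [hψ, if_pos (Finset.mem_range.mp hl)]
            calc g N * ((x s)^(l+1)/((l:ℝ)+1)) ≤ L * 1 := by
                  apply mul_le_mul (hgle N) (hXpow_le_one s l) ?_ hL0
                  have := (hx s).1
                  positivity
              _ = L := by ring
        _ = N * L := by rw [Finset.sum_const, Finset.card_range]; push_cast; ring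
    have hsub : ∀ l : ℕ, g N * ((x s)^(l+1)/((l:ℝ)+1)) - ψ l ≤ g (l+1) * (x s)^(l+1) / ((l:ℝ)+1) := by
      intro l
      by_cases hl : l < N
      · simp only [hψ, if_pos hl, sub_self]
        exact hterm_nonneg s l
      · simp only [hψ, if_neg hl, sub_zero, mul_div_assoc]
        apply mul_le_mul_of_nonneg_right (hgm (by omega : N ≤ l+1))
        have := (hx s).1
        positivity
    have hgNsum : Summable (fun l : ℕ => g N * ((x s)^(l+1)/((l:ℝ)+1))) :=
      (hMsum s).summable.mul_left (g N)
    calc g N * (-Real.log (1 - x s)) - N * L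
        ≤ g N * (-Real.log (1 - x s)) - ∑' l, ψ l := by linarith [hψtsum]
      _ = ∑' (l : ℕ), (g N * ((x s)^(l+1)/((l:ℝ)+1)) - ψ l) := by
          rw [Summable.tsum_sub hgNsum hψsum, ((hMsum s).mul_left (g N)).tsum_eq]
      _ ≤ ∑' (l : ℕ), g (l+1) * (x s)^(l+1) / ((l:ℝ)+1) :=
          Summable.tsum_le_tsum hsub (hgNsum.sub hψsum) (hFsum s)
  -- epsilon argument
  rw [Metric.tendsto_atTop]
  intro ε hε
  set δ1 : ℝ := min 1 (ε/(2*(L+1))) with hδ1def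
  have hδ1pos : 0 < δ1 := lt_min (by norm_num) (by positivity)
  have hδ1le1 : δ1 ≤ 1 := min_le_left _ _
  have hδ1le : δ1 ≤ ε/(2*(L+1)) := min_le_right _ _
  obtain ⟨N, hN⟩ : ∃ N, L - ε/16 < g N := by
    rcases (hgL.eventually (eventually_gt_nhds (show L - ε/16 < L by linarith))).exists with ⟨N, hN⟩
    exact ⟨N, hN⟩
  obtain ⟨s0, hs0⟩ := Metric.tendsto_atTop.mp hM δ1 hδ1pos
  refine ⟨max s0 (max 1 (8*((N:ℝ)*L+1)/ε)), fun s hs => ?_⟩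
  have hss0 : s0 ≤ s := le_trans (le_max_left _ _) hs
  have hs1 : (1:ℝ) ≤ s := le_trans (le_trans (le_max_left _ _) (le_max_right _ _)) hs
  have hsN : 8*((N:ℝ)*L+1)/ε ≤ s := le_trans (le_trans (le_max_right _ _) (le_max_right _ _)) hs
  have hspos : (0:ℝ) < s := by linarith
  have hrho := hs0 s hss0
  rw [Real.dist_eq] at hrho
  set ρ : ℝ := -Real.log (1 - x s) / s with hρdef
  obtain ⟨hrho1, hrho2⟩ := abs_lt.mp hrho
  set F : ℝ := ∑' l : ℕ, g (l+1) * (x s)^(l+1) / ((l:ℝ)+1) with hFdef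
  have hup : F / s ≤ L * ρ := by
    rw [hρdef, ← mul_div_assoc]
    exact (div_le_div_iff_of_pos_right hspos).mpr (hupper s)
  have hlo : g N * ρ - (N:ℝ) * L / s ≤ F / s := by
    rw [hρdef, ← mul_div_assoc, ← sub_div]
    exact (div_le_div_iff_of_pos_right hspos).mpr (hlower N s)
  have hNLs : (N:ℝ) * L / s ≤ ε/8 := by
    rw [div_le_iff₀ hspos]
    have h1 : 8*((N:ℝ)*L+1) ≤ s * ε := (div_le_iff₀ hε).mp hsN
    nlinarith
  have hLd : L * δ1 ≤ ε/2 := by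
    have h1 : L * δ1 ≤ L * (ε/(2*(L+1))) := mul_le_mul_of_nonneg_left hδ1le hL0
    have h2 : L * (ε/(2*(L+1))) ≤ ε/2 := by
      rw [mul_div_assoc', div_le_div_iff₀ (by positivity) (by norm_num)]
      nlinarith [mul_nonneg hL0 hε.le]
    linarith
  rw [Real.dist_eq, abs_lt]
  constructor
  · have m1 : g N * (4 - δ1) ≤ g N * ρ := mul_le_mul_of_nonneg_left (by linarith) (hg0 N)
    have m2 : (L - ε/16) * (4 - δ1) ≤ g N * (4 - δ1) :=
      mul_le_mul_of_nonneg_right (le_of_lt hN) (by linarith)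
    nlinarith [mul_nonneg hδ1pos.le hε.le, hLd, hlo, hNLs, m1, m2]
  · have m3 : L * ρ ≤ L * (4 + δ1) := mul_le_mul_of_nonneg_left (by linarith) hL0
    nlinarith [hup, hLd, m3]


/-- For every integer `α ≥ 2` and every fixed `r ∈ [0,1]`, the asymptotic
Rényi-α Page curve satisfies `lim_{s→∞} Φ_α(s,r)/s = 2·min(r, 1−r)`. -/
theorem renyi_page_curve_large_squeezing_limit (α : ℕ) (hα : 2 ≤ α) (r : ℝ)
    (hr : r ∈ Set.Icc (0 : ℝ) 1) :
    Tendsto (fun s : ℝ => PhiA α s r / s) atTop (nhds (2 * min r (1 - r))) := by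
  obtain ⟨hr0, hr1⟩ := hr
  set L : ℝ := min r (1-r) with hLdef
  set g : ℕ → ℝ := fun n => ∑ k ∈ Finset.range n, (catalan k : ℝ) * (r*(1-r))^(k+1) with hgdef
  have hu0 : 0 ≤ r * (1-r) := mul_nonneg hr0 (by linarith)
  have hg0 : ∀ n, 0 ≤ g n := fun n =>
    Finset.sum_nonneg (fun k _ => mul_nonneg (Nat.cast_nonneg _) (pow_nonneg hu0 _))
  have hgm : Monotone g := by
    apply monotone_nat_of_le_succ
    intro n
    simp only [hgdef, Finset.sum_range_succ]
    nlinarith [mul_nonneg (Nat.cast_nonneg (catalan n) : (0:ℝ) ≤ catalan n) (pow_nonneg hu0 (n+1))]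
  have hgL : Tendsto g atTop (𝓝 L) := catalan_tendsto r ⟨hr0, hr1⟩
  have hgle : ∀ n, g n ≤ L := fun n => hgm.ge_of_tendsto hgL n
  have hL0 : 0 ≤ L := le_trans (hg0 0) (hgle 0)
  -- the x functions
  set xf : ℝ → ℝ → ℝ := fun c s => Real.sinh (2*s)^2 / (Real.cosh (2*s)^2 + c) with hxf
  -- summability
  have hsummand : ∀ (c : ℝ), 0 ≤ c → ∀ s, Summable
      (fun l : ℕ => g (l+1) * (xf c s)^(l+1) / ((l:ℝ)+1)) := by
    intro c hc s
    have hX := xval_mem c s hc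
    apply Summable.of_nonneg_of_le
      (fun l => by
        have := hX.1
        have := hg0 (l+1)
        positivity)
      (fun l => ?_)
      ((summable_geometric_of_lt_one hX.1 hX.2).mul_left L)
    have h1 : (xf c s)^(l+1) ≤ (xf c s)^l :=
      pow_le_pow_of_le_one hX.1 hX.2.le (by omega)
    calc g (l+1) * (xf c s)^(l+1) / ((l:ℝ)+1)
        ≤ g (l+1) * (xf c s)^(l+1) := div_le_self
          (mul_nonneg (hg0 _) (pow_nonneg hX.1 _)) (by push_cast; linarith [Nat.cast_nonneg (α := ℝ) l])
      _ ≤ L * (xf c s)^l := by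
          apply mul_le_mul (hgle _) h1 (pow_nonneg hX.1 _) hL0
  have hGfun : ∀ l : ℕ, Gfun (l+1) r = g (l+1) := fun l => Gfun_eq (l+1) (by omega) r
  set a : ℕ := (α - 1) / 2 with hadef
  set zeta : ℝ := if Even α then (1:ℝ) else 0 with hzdef
  have hdecomp : ∀ s : ℝ, PhiA α s r =
      (1 / ((α:ℝ) - 1)) *
        (zeta/2 * (∑' l : ℕ, g (l+1) * (xf 0 s)^(l+1) / ((l:ℝ)+1)) +
          ∑ m ∈ Finset.Icc 1 a,
            (∑' l : ℕ, g (l+1) * (xf (Real.cot (Real.pi * m / α)^2) s)^(l+1) / ((l:ℝ)+1))) := by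
    intro s
    rw [PhiA]
    congr 1
    have hterm : ∀ l : ℕ,
        ((if Even α then (1 : ℝ) else 0) * Real.tanh (2 * s) ^ (2 * (l + 1)) / (2 * ((l : ℝ) + 1)) +
          ∑ m ∈ Finset.Icc 1 ((α - 1) / 2),
            Real.sinh (2 * s) ^ (2 * (l + 1)) /
              (((l : ℝ) + 1) * (Real.cosh (2 * s) ^ 2 + Real.cot (Real.pi * m / α) ^ 2) ^ (l + 1))) *
          Gfun (l + 1) r
        = zeta/2 * (g (l+1) * (xf 0 s)^(l+1) / ((l:ℝ)+1)) +
          ∑ m ∈ Finset.Icc 1 a,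
            g (l+1) * (xf (Real.cot (Real.pi * m / α)^2) s)^(l+1) / ((l:ℝ)+1) := by
      intro l
      rw [hGfun l, add_mul, Finset.sum_mul, ← hzdef, ← hadef]
      have hl1 : ((l:ℝ)+1) ≠ 0 := by positivity
      congr 1
      · have hch : (0:ℝ) < Real.cosh (2*s) := Real.cosh_pos _
        have htanh : Real.tanh (2*s)^(2*(l+1)) = (xf 0 s)^(l+1) := by
          rw [pow_mul, Real.tanh_eq_sinh_div_cosh, div_pow]
          simp only [hxf, add_zero]
        rw [htanh]
        field_simp
      · refine Finset.sum_congr rfl (fun m _ => ?_)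
        have hc : (0:ℝ) ≤ Real.cot (Real.pi * m / α)^2 := sq_nonneg _
        have hch : (1:ℝ) ≤ Real.cosh (2*s) := Real.one_le_cosh _
        have hb : (0:ℝ) < Real.cosh (2*s)^2 + Real.cot (Real.pi * m / α)^2 := by nlinarith
        have hbp : (Real.cosh (2*s)^2 + Real.cot (Real.pi * m / α)^2)^(l+1) ≠ 0 :=
          ne_of_gt (pow_pos hb _)
        simp only [hxf]
        rw [pow_mul, div_pow]
        field_simp
    rw [tsum_congr hterm]
    rw [Summable.tsum_add ((hsummand 0 le_rfl s).mul_left _)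
        (summable_sum (fun m _ => hsummand _ (sq_nonneg _) s))]
    rw [tsum_mul_left, Summable.tsum_finsetSum (fun m _ => hsummand _ (sq_nonneg _) s)]
  have hfun : (fun s : ℝ => PhiA α s r / s) = fun s : ℝ =>
      (1 / ((α:ℝ)-1)) *
        (zeta/2 * ((∑' l : ℕ, g (l+1) * (xf 0 s)^(l+1) / ((l:ℝ)+1))/s) +
          ∑ m ∈ Finset.Icc 1 a,
            (∑' l : ℕ, g (l+1) * (xf (Real.cot (Real.pi * m / α)^2) s)^(l+1) / ((l:ℝ)+1))/s) := by
    funext s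
    rw [hdecomp s, mul_div_assoc, add_div, mul_div_assoc, Finset.sum_div]
  rw [hfun]
  have hA : Tendsto (fun s : ℝ => (∑' l : ℕ, g (l+1) * (xf 0 s)^(l+1)/((l:ℝ)+1))/s)
      atTop (𝓝 (4*L)) :=
    abel_main g L hg0 hgm hgL (xf 0) (fun s => xval_mem 0 s le_rfl) (logM_tendsto 0 le_rfl)
  have hB : ∀ m ∈ Finset.Icc 1 a, Tendsto
      (fun s : ℝ => (∑' l : ℕ, g (l+1) * (xf (Real.cot (Real.pi * m / α)^2) s)^(l+1)/((l:ℝ)+1))/s)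
      atTop (𝓝 (4*L)) := fun m _ =>
    abel_main g L hg0 hgm hgL _ (fun s => xval_mem _ s (sq_nonneg _)) (logM_tendsto _ (sq_nonneg _))
  have hmain := (((hA.const_mul (zeta/2)).add
      (tendsto_finset_sum (Finset.Icc 1 a) hB)).const_mul (1/((α:ℝ)-1)))
  have hval : (1/((α:ℝ)-1)) * (zeta/2 * (4*L) + ∑ _m ∈ Finset.Icc 1 a, (4*L)) = 2*L := by
    rw [Finset.sum_const, Nat.card_Icc, nsmul_eq_mul]
    have hcard : a + 1 - 1 = a := by omega
    rw [hcard]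
    rcases Nat.even_or_odd α with he | ho
    · rw [hzdef, if_pos he]
      obtain ⟨k, hk⟩ := he
      subst hk
      have hk1 : 1 ≤ k := by omega
      have ha' : a = k - 1 := by rw [hadef]; omega
      rw [ha']
      have hc1 : ((k - 1 : ℕ) : ℝ) = (k:ℝ) - 1 := by
        push_cast [Nat.cast_sub hk1]; ring
      rw [hc1]
      have hk2 : (1:ℝ) ≤ (k:ℝ) := by exact_mod_cast hk1
      have hne : ((k:ℝ) + (k:ℝ)) - 1 ≠ 0 := by push_cast; nlinarith
      push_cast
      field_simp
      ring_nf
      have hne2 : (-1 + (k:ℝ)*2) ≠ 0 := by linarith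
      have e : (-1 + (k:ℝ)*2)⁻¹ * (-1 + (k:ℝ)*2) = 1 := inv_mul_cancel₀ hne2
      linear_combination (4*L) * e
    · rw [hzdef, if_neg (by simpa using (Nat.not_even_iff_odd.mpr ho))]
      obtain ⟨k, hk⟩ := ho
      subst hk
      have hk1 : 1 ≤ k := by omega
      have ha' : a = k := by rw [hadef]; omega
      rw [ha']
      have hk2 : (1:ℝ) ≤ (k:ℝ) := by exact_mod_cast hk1
      have hne : ((2*k+1:ℕ):ℝ) - 1 ≠ 0 := by push_cast; nlinarith
      push_cast
      field_simp
      ring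
  rw [← hval]
  exact hmain

end
end

section
/- Let A and B be k×k real matrices and let M := [[A,B],[B,−A]] be the corresponding 2k×2k block matrix. Then Tr(M^j) = 0 for every odd positive integer j. Moreover, if A and B are both symmetric, then Tr(Ω·M^j) = 0 for every integer j ≥ 0, where Ω := [[0, I_k],[−I_k, 0]] is the standard symplectic form. -/
open scoped BigOperators Topology ENNReal
open MeasureTheory Filter Real Matrix

noncomputable section

/-- For `k×k` real matrices `A`, `B` and `M = [[A,B],[B,−A]]`:
`Tr(M^j) = 0` for every odd `j`, and if `A`, `B` are symmetric then `Tr(Ω·M^j) = 0` for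
every `j ≥ 0`, where `Ω = [[0,1],[−1,0]]` is the standard symplectic form. -/
theorem block_matrix_trace_vanishing {k : ℕ} (A B : Matrix (Fin k) (Fin k) ℝ) :
    (∀ j : ℕ, Odd j → (Matrix.fromBlocks A B B (-A) ^ j).trace = 0) ∧
      (Aᵀ = A → Bᵀ = B → ∀ j : ℕ,
        (Matrix.fromBlocks (0 : Matrix (Fin k) (Fin k) ℝ) 1 (-1) 0 *
            Matrix.fromBlocks A B B (-A) ^ j).trace = 0) := by
  set M : Matrix (Fin k ⊕ Fin k) (Fin k ⊕ Fin k) ℝ := Matrix.fromBlocks A B B (-A) with hM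
  set Ω : Matrix (Fin k ⊕ Fin k) (Fin k ⊕ Fin k) ℝ :=
    Matrix.fromBlocks (0 : Matrix (Fin k) (Fin k) ℝ) 1 (-1) 0 with hΩ
  have hanti : Ω * M = -(M * Ω) := by
    simp [hM, hΩ, Matrix.fromBlocks_multiply, Matrix.fromBlocks_neg]
  have hΩ2 : Ω * Ω = -1 := by
    simp [hΩ, Matrix.fromBlocks_multiply]
    rw [← Matrix.fromBlocks_one, Matrix.fromBlocks_neg]
    simp
  have hcomm : ∀ j : ℕ, Ω * M ^ j = (-M) ^ j * Ω := by
    intro j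
    induction j with
    | zero => simp
    | succ n ih =>
      rw [pow_succ, ← mul_assoc, ih, mul_assoc, hanti, pow_succ]
      simp [mul_assoc]
  constructor
  · intro j hj
    have h1 : (Ω * (M ^ j * Ω)).trace = -(M ^ j).trace := by
      rw [Matrix.trace_mul_comm, mul_assoc, hΩ2]
      simp
    have h2 : Ω * (M ^ j * Ω) = -(-M) ^ j := by
      rw [← mul_assoc, hcomm, mul_assoc, hΩ2]
      simp
    rw [h2] at h1
    rw [hj.neg_pow] at h1
    simp only [Matrix.trace_neg, neg_neg] at h1
    linarith
  · intro hA hB j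
    have hMsymm : Mᵀ = M := by
      simp [hM, Matrix.fromBlocks_transpose, hA, hB]
    have hΩsymm : Ωᵀ = -Ω := by
      simp [hΩ, Matrix.fromBlocks_transpose, Matrix.fromBlocks_neg]
    have h1 : (Ω * M ^ j).trace = ((Ω * M ^ j)ᵀ).trace := (Matrix.trace_transpose _).symm
    rw [Matrix.transpose_mul, Matrix.transpose_pow, hMsymm, hΩsymm, Matrix.mul_neg,
      Matrix.trace_neg, Matrix.trace_mul_comm] at h1
    rw [Matrix.trace_mul_comm]
    linarith

end
end

section
/- Let T be a k×k complex matrix, let A := Re T and B := Im T be its entrywise real and imaginary parts, and let M := [[A,B],[B,−A]] be the corresponding 2k×2k real block matrix. Then for every integer i ≥ 1, Tr(M^{2i}) (viewed as a complex number) equals 2·Tr((T·T̄)^i), where T̄ is the entrywise complex conjugate of T; in particular Tr((T·T̄)^i) is a real number. -/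
open scoped BigOperators Topology ENNReal
open MeasureTheory Filter Real Matrix

noncomputable section

private def cplx {k : ℕ} (S : Matrix (Fin k) (Fin k) ℂ) :
    Matrix (Fin k ⊕ Fin k) (Fin k ⊕ Fin k) ℝ :=
  Matrix.fromBlocks (S.map Complex.re) (-(S.map Complex.im))
    (S.map Complex.im) (S.map Complex.re)

private lemma cplx_mul {k : ℕ} (S₁ S₂ : Matrix (Fin k) (Fin k) ℂ) :
    cplx (S₁ * S₂) = cplx S₁ * cplx S₂ := by
  ext x y
  cases x <;> cases y <;>
    · simp only [cplx, Matrix.fromBlocks_multiply, Matrix.fromBlocks_apply₁₁,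
        Matrix.fromBlocks_apply₁₂, Matrix.fromBlocks_apply₂₁, Matrix.fromBlocks_apply₂₂,
        Matrix.add_apply, Matrix.neg_apply, Matrix.mul_apply, Matrix.map_apply,
        Fintype.sum_sum_type, Complex.mul_re, Complex.mul_im, Finset.sum_sub_distrib, Finset.sum_add_distrib,
        Finset.sum_neg_distrib]
      simp only [Complex.re_sum, Complex.im_sum, ← Finset.sum_neg_distrib,
        ← Finset.sum_add_distrib]
      apply Finset.sum_congr rfl
      intros
      simp [Complex.mul_re, Complex.mul_im, Complex.star_def, Complex.conj_re, Complex.conj_im]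
      try ring

private lemma cplx_pow {k : ℕ} (S : Matrix (Fin k) (Fin k) ℂ) (n : ℕ) (hn : 1 ≤ n) :
    cplx (S ^ n) = cplx S ^ n := by
  induction n with
  | zero => omega
  | succ m ih =>
    rcases Nat.eq_or_lt_of_le hn with h | h
    · simp [← h]
    · have hm : 1 ≤ m := by omega
      rw [pow_succ, pow_succ, cplx_mul, ih hm]

private lemma trace_cplx {k : ℕ} (S : Matrix (Fin k) (Fin k) ℂ) :
    (cplx S).trace = 2 * (S.trace).re := by
  simp [cplx, Matrix.trace, Matrix.fromBlocks, Matrix.diag, Complex.re_sum,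
    Fintype.sum_sum_type, Matrix.map_apply]
  ring

private lemma trace_mul_pow_comm {k : ℕ} (X Y : Matrix (Fin k) (Fin k) ℂ) (n : ℕ)
    (hn : 1 ≤ n) : ((X * Y) ^ n).trace = ((Y * X) ^ n).trace := by
  obtain ⟨m, rfl⟩ : ∃ m, n = m + 1 := ⟨n - 1, by omega⟩
  have h : SemiconjBy X (Y * X) (X * Y) := (mul_assoc X Y X).symm
  have key : X * (Y * X) ^ m = (X * Y) ^ m * X := h.pow_right m
  rw [pow_succ, ← mul_assoc, ← key, mul_assoc, Matrix.trace_mul_comm,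
    mul_assoc, ← pow_succ]

/-- For a `k×k` complex matrix `T` with `A = Re T`, `B = Im T` and
`M = [[A,B],[B,−A]]`: for every `i ≥ 1`, `Tr(M^{2i}) = 2·Tr((T·T̄)^i)` as complex numbers;
in particular `Tr((T·T̄)^i)` is real. -/
theorem trace_even_power_block_eq {k : ℕ} (T : Matrix (Fin k) (Fin k) ℂ) (i : ℕ)
    (hi : 1 ≤ i) :
    (((Matrix.fromBlocks (T.map Complex.re) (T.map Complex.im)
          (T.map Complex.im) (-(T.map Complex.re)) ^ (2 * i)).trace : ℝ) : ℂ) =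
        2 * ((T * T.map (starRingEnd ℂ)) ^ i).trace ∧
      (((T * T.map (starRingEnd ℂ)) ^ i).trace).im = 0 := by
  set S := T * T.map (starRingEnd ℂ) with hS
  -- trace of S^i is real
  have him : ((S ^ i).trace).im = 0 := by
    have h1 : star ((S ^ i).trace) = ((S ^ i)ᴴ).trace := by
      rw [Matrix.trace_conjTranspose]
    have h2 : (S ^ i)ᴴ = ((T.map (starRingEnd ℂ) * T) ^ i)ᵀ := by
      rw [Matrix.conjTranspose_pow, Matrix.transpose_pow]
      congr 1
      rw [hS, Matrix.conjTranspose_mul]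
      ext x y
      simp [Matrix.conjTranspose_apply, Matrix.map_apply, Matrix.transpose_apply,
        Matrix.mul_apply, mul_comm]
    have h3 : star ((S ^ i).trace) = ((S ^ i).trace) := by
      rw [h1, h2, Matrix.trace_transpose, trace_mul_pow_comm _ _ _ hi, ← hS]
    have := congrArg Complex.im h3
    simp [Complex.star_def] at this
    linarith
  refine ⟨?_, him⟩
  -- M ^ 2 = cplx S
  have hM2 : (Matrix.fromBlocks (T.map Complex.re) (T.map Complex.im)
          (T.map Complex.im) (-(T.map Complex.re))) ^ 2 = cplx S := by
    rw [pow_two]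
    ext x y
    cases x <;> cases y <;>
      · simp only [cplx, hS, Matrix.fromBlocks_multiply, Matrix.fromBlocks_apply₁₁,
          Matrix.fromBlocks_apply₁₂, Matrix.fromBlocks_apply₂₁, Matrix.fromBlocks_apply₂₂,
          Matrix.add_apply, Matrix.neg_apply, Matrix.mul_apply, Matrix.map_apply,
          Fintype.sum_sum_type, Complex.mul_re, Complex.mul_im, Matrix.neg_mul, Matrix.mul_neg,
          Finset.sum_sub_distrib, Finset.sum_add_distrib, Finset.sum_neg_distrib,
          Complex.conj_re, Complex.conj_im, starRingEnd_apply]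
        simp only [Complex.re_sum, Complex.im_sum, ← Finset.sum_neg_distrib,
          ← Finset.sum_add_distrib]
        apply Finset.sum_congr rfl
        intros
        simp [Complex.mul_re, Complex.mul_im, Complex.star_def, Complex.conj_re, Complex.conj_im]
        try ring
  have htr : (Matrix.fromBlocks (T.map Complex.re) (T.map Complex.im)
          (T.map Complex.im) (-(T.map Complex.re)) ^ (2 * i)).trace
      = 2 * ((S ^ i).trace).re := by
    rw [pow_mul, hM2, ← cplx_pow S i hi, trace_cplx]
  rw [htr]
  apply Complex.ext
  · simp
  · simp [him]
end
end

section
/- For every integer α ≥ 2 and every complex number x: (x+1)^α − (x−1)^α = 2α·x^ζ·∏_{m=1}^{⌊(α−1)/2⌋} (x² + cot²(πm/α)), where ζ := 1 if α is even and ζ := 0 if α is odd. -/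
open scoped BigOperators Topology ENNReal
open MeasureTheory Filter Real Matrix

noncomputable section

private lemma rpf_pow_sub_pow_prod (n : ℕ) (hn : 0 < n) {ζ : ℂ} (hζ : IsPrimitiveRoot ζ n)
    (a b : ℂ) : a ^ n - b ^ n = ∏ i ∈ Finset.range n, (a - ζ ^ i * b) := by
  by_cases hb : b = 0
  · simp [hb, zero_pow hn.ne', Finset.prod_const]
  · have h := X_pow_sub_C_eq_prod hζ hn (one_pow n)
    apply_fun (Polynomial.eval (a / b)) at h
    simp only [Polynomial.eval_sub, Polynomial.eval_pow, Polynomial.eval_X, Polynomial.eval_C,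
      Polynomial.eval_prod, Polynomial.eval_mul, Polynomial.eval_one] at h
    have h' : (a / b) ^ n - 1 = ∏ i ∈ Finset.range n, (a / b - ζ ^ i) := by simpa using h
    calc a ^ n - b ^ n = ((a / b) ^ n - 1) * b ^ n := by rw [div_pow, sub_mul, div_mul_cancel₀ _ (pow_ne_zero _ hb), one_mul]
    _ = (∏ i ∈ Finset.range n, (a / b - ζ ^ i)) * ∏ _i ∈ Finset.range n, b := by
        rw [h', Finset.prod_const, Finset.card_range]
    _ = ∏ i ∈ Finset.range n, (a - ζ ^ i * b) := by
        rw [← Finset.prod_mul_distrib]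
        exact Finset.prod_congr rfl fun i _ => by field_simp

private lemma rpf_factor_eq (α : ℕ) (hα : 2 ≤ α) (i : ℕ) (h1 : 1 ≤ i) (h2 : i ≤ α - 1) (x : ℂ) :
    (x + 1) - (Complex.exp (2 * Real.pi * Complex.I / α)) ^ i * (x - 1)
      = (1 - (Complex.exp (2 * Real.pi * Complex.I / α)) ^ i)
        * (x + Complex.I * ((Real.cot (Real.pi * i / α) : ℝ) : ℂ)) := by
  have hα0 : (α : ℝ) ≠ 0 := by positivity
  set φ : ℝ := Real.pi * i / α with hφ
  have hφpos : 0 < φ := by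
    apply div_pos (by positivity) (by positivity)
  have hφlt : φ < Real.pi := by
    rw [hφ, div_lt_iff₀ (by positivity)]
    have : (i : ℝ) < α := by
      exact_mod_cast lt_of_le_of_lt h2 (Nat.sub_lt (by omega) one_pos)
    nlinarith [Real.pi_pos]
  have hs : Real.sin φ ≠ 0 := ne_of_gt (Real.sin_pos_of_pos_of_lt_pi hφpos hφlt)
  have hζ : (Complex.exp (2 * Real.pi * Complex.I / α)) ^ i
      = Complex.cos ((2 * φ : ℝ) : ℂ) + Complex.sin ((2 * φ : ℝ) : ℂ) * Complex.I := by
    rw [← Complex.exp_nat_mul, ← Complex.exp_mul_I]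
    congr 1
    push_cast [hφ]
    field_simp
  rw [hζ, ← Complex.ofReal_cos, ← Complex.ofReal_sin, Real.cos_two_mul, Real.sin_two_mul,
    Real.cot_eq_cos_div_sin]
  have h1' : Complex.sin ((φ : ℝ) : ℂ) ^ 2 + Complex.cos ((φ : ℝ) : ℂ) ^ 2 = 1 :=
    Complex.sin_sq_add_cos_sq _
  have hsC : Complex.sin ((φ : ℝ) : ℂ) ≠ 0 := by
    rw [← Complex.ofReal_sin]; exact_mod_cast hs
  push_cast
  field_simp
  linear_combination (2 * Complex.I * Complex.cos ((φ : ℝ) : ℂ)) * h1' +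
    (2 * Complex.cos ((φ : ℝ) : ℂ) ^ 2 * Complex.sin ((φ : ℝ) : ℂ)) * Complex.I_sq

private lemma rpf_cot_pi_sub (y : ℝ) : Real.cot (Real.pi - y) = - Real.cot y := by
  rw [Real.cot_eq_cos_div_sin, Real.cot_eq_cos_div_sin, Real.cos_pi_sub, Real.sin_pi_sub, neg_div]

private lemma rpf_pair (x : ℂ) (c : ℝ) :
    (x + Complex.I * (c : ℂ)) * (x + Complex.I * ((-c : ℝ) : ℂ)) = x ^ 2 + (c : ℂ) ^ 2 := by
  push_cast
  linear_combination (-(c : ℂ) ^ 2) * Complex.I_sq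

/-- For every integer `α ≥ 2` and complex `x`:
`(x+1)^α − (x−1)^α = 2α·x^ζ·∏_{m=1}^{⌊(α−1)/2⌋} (x² + cot²(πm/α))`,
where `ζ = 1` if `α` is even and `ζ = 0` if `α` is odd. -/
theorem renyi_polynomial_factorization (α : ℕ) (hα : 2 ≤ α) (x : ℂ) :
    (x + 1) ^ α - (x - 1) ^ α =
      2 * (α : ℂ) * x ^ (if Even α then 1 else 0) *
        ∏ m ∈ Finset.Icc 1 ((α - 1) / 2),
          (x ^ 2 + ((Real.cot (Real.pi * m / α) : ℝ) : ℂ) ^ 2) := by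
  obtain ⟨n, rfl⟩ : ∃ n, α = n + 1 := ⟨α - 1, by omega⟩
  have hn : 1 ≤ n := by omega
  set ζ : ℂ := Complex.exp (2 * Real.pi * Complex.I / ((n + 1 : ℕ) : ℂ)) with hζdef
  have hprim : IsPrimitiveRoot ζ (n + 1) := Complex.isPrimitiveRoot_exp _ (by omega)
  set g : ℕ → ℂ := fun j => x + Complex.I * ((Real.cot (Real.pi * j / ((n + 1 : ℕ) : ℝ)) : ℝ) : ℂ)
    with hg
  have h0 : (x + 1) ^ (n + 1) - (x - 1) ^ (n + 1)
      = ∏ i ∈ Finset.range (n + 1), ((x + 1) - ζ ^ i * (x - 1)) :=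
    rpf_pow_sub_pow_prod (n + 1) (by omega) hprim _ _
  rw [h0, Finset.prod_range_succ']
  have h2 : ((x + 1) - ζ ^ 0 * (x - 1)) = 2 := by rw [pow_zero, one_mul]; ring
  have hfac : ∀ i ∈ Finset.range n, (x + 1) - ζ ^ (i + 1) * (x - 1) = (1 - ζ ^ (i + 1)) * g (i + 1) := by
    intro i hi
    rw [Finset.mem_range] at hi
    exact rpf_factor_eq (n + 1) (by omega) (i + 1) (by omega) (by omega) x
  rw [h2, Finset.prod_congr rfl hfac, Finset.prod_mul_distrib, hprim.prod_one_sub_pow_eq_order]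
  have hIcc : ∏ i ∈ Finset.range n, g (i + 1) = ∏ j ∈ Finset.Icc 1 n, g j := by
    refine Finset.prod_nbij' (fun i => i + 1) (fun j => j - 1) ?_ ?_ ?_ ?_ ?_
    · intro i hi; simp only [Finset.mem_range] at hi; simp only [Finset.mem_Icc]; omega
    · intro j hj; simp only [Finset.mem_Icc] at hj; simp only [Finset.mem_range]; omega
    · intro i hi; simp only [Finset.mem_range] at hi; omega
    · intro j hj; simp only [Finset.mem_Icc] at hj; omega
    · intro i _; rfl
  rw [hIcc]
  have hNα : ((n : ℝ) + 1) ≠ 0 := by positivity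
  have hIoc : ∀ a : ℕ, Finset.Icc 1 a = Finset.Ioc 0 a := by
    intro a; ext j; simp only [Finset.mem_Icc, Finset.mem_Ioc]; omega
  -- key pairing fact
  have hpairterm : ∀ m : ℕ, 1 ≤ m → m + m ≤ n → g m * g (n + 1 - m)
      = x ^ 2 + ((Real.cot (Real.pi * m / ((n + 1 : ℕ) : ℝ)) : ℝ) : ℂ) ^ 2 := by
    intro m hm1 hm2
    have hcast : ((n + 1 - m : ℕ) : ℝ) = (n : ℝ) + 1 - m := by
      push_cast [Nat.cast_sub (by omega : m ≤ n + 1)]; ring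
    have harg : Real.pi * ((n + 1 - m : ℕ) : ℝ) / ((n + 1 : ℕ) : ℝ)
        = Real.pi - Real.pi * m / ((n + 1 : ℕ) : ℝ) := by
      rw [hcast]; push_cast; field_simp
    have : g (n + 1 - m) = x + Complex.I *
        ((-(Real.cot (Real.pi * m / ((n + 1 : ℕ) : ℝ))) : ℝ) : ℂ) := by
      simp only [hg]
      rw [harg, rpf_cot_pi_sub]
    rw [this]
    exact rpf_pair x _
  rcases Nat.even_or_odd n with ⟨k, hk⟩ | ⟨k, hk⟩
  · -- n = k + k, α = 2k+1 odd
    subst hk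
    have hkdiv : (k + k + 1 - 1) / 2 = k := by omega
    have hodd : ¬ Even (k + k + 1) := by simp [Nat.even_iff]; omega
    rw [hkdiv, if_neg hodd, pow_zero]
    have hsplit : (∏ j ∈ Finset.Ioc 0 k, g j) * (∏ j ∈ Finset.Ioc k (k + k), g j)
        = ∏ j ∈ Finset.Ioc 0 (k + k), g j :=
      Finset.prod_Ioc_consecutive g (by omega) (by omega)
    have hre : ∏ j ∈ Finset.Ioc k (k + k), g j = ∏ m ∈ Finset.Ioc 0 k, g (k + k + 1 - m) := by
      refine (Finset.prod_nbij' (fun m => k + k + 1 - m) (fun j => k + k + 1 - j) ?_ ?_ ?_ ?_ ?_).symm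
      · intro m hm; simp only [Finset.mem_Ioc] at hm ⊢; omega
      · intro j hj; simp only [Finset.mem_Ioc] at hj ⊢; omega
      · intro m hm; simp only [Finset.mem_Ioc] at hm; omega
      · intro j hj; simp only [Finset.mem_Ioc] at hj; omega
      · intro m _; rfl
    have : ∏ j ∈ Finset.Icc 1 (k + k), g j
        = ∏ m ∈ Finset.Icc 1 k, (x ^ 2 + ((Real.cot (Real.pi * m / ((k + k + 1 : ℕ) : ℝ)) : ℝ) : ℂ) ^ 2) := by
      rw [hIoc, ← hsplit, hre, ← Finset.prod_mul_distrib, hIoc]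
      refine Finset.prod_congr rfl ?_
      intro m hm
      rw [Finset.mem_Ioc] at hm
      exact hpairterm m (by omega) (by omega)
    rw [this]
    push_cast
    ring
  · -- n = 2k+1, α = 2k+2 even
    subst hk
    have hkdiv : (2 * k + 1 + 1 - 1) / 2 = k := by omega
    have heven : Even (2 * k + 1 + 1) := ⟨k + 1, by ring⟩
    rw [hkdiv, if_pos heven, pow_one]
    have hsplit1 : (∏ j ∈ Finset.Ioc 0 k, g j) * (∏ j ∈ Finset.Ioc k (k + 1), g j)
        = ∏ j ∈ Finset.Ioc 0 (k + 1), g j :=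
      Finset.prod_Ioc_consecutive g (by omega) (by omega)
    have hsplit2 : (∏ j ∈ Finset.Ioc 0 (k + 1), g j) * (∏ j ∈ Finset.Ioc (k + 1) (2 * k + 1), g j)
        = ∏ j ∈ Finset.Ioc 0 (2 * k + 1), g j :=
      Finset.prod_Ioc_consecutive g (by omega) (by omega)
    have hmid : ∏ j ∈ Finset.Ioc k (k + 1), g j = x := by
      rw [show Finset.Ioc k (k + 1) = {k + 1} by rw [Nat.Ioc_succ_singleton], Finset.prod_singleton]
      have harg : Real.pi * ((k + 1 : ℕ) : ℝ) / ((2 * k + 1 + 1 : ℕ) : ℝ) = Real.pi / 2 := by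
        push_cast; field_simp; ring
      simp only [hg]
      rw [harg, Real.cot_eq_cos_div_sin, Real.cos_pi_div_two, zero_div]
      simp
    have hre : ∏ j ∈ Finset.Ioc (k + 1) (2 * k + 1), g j
        = ∏ m ∈ Finset.Ioc 0 k, g (2 * k + 1 + 1 - m) := by
      refine (Finset.prod_nbij' (fun m => 2 * k + 1 + 1 - m) (fun j => 2 * k + 1 + 1 - j) ?_ ?_ ?_ ?_ ?_).symm
      · intro m hm; simp only [Finset.mem_Ioc] at hm ⊢; omega
      · intro j hj; simp only [Finset.mem_Ioc] at hj ⊢; omega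
      · intro m hm; simp only [Finset.mem_Ioc] at hm; omega
      · intro j hj; simp only [Finset.mem_Ioc] at hj; omega
      · intro m _; rfl
    have : ∏ j ∈ Finset.Icc 1 (2 * k + 1), g j
        = x * ∏ m ∈ Finset.Icc 1 k, (x ^ 2 + ((Real.cot (Real.pi * m / ((2 * k + 1 + 1 : ℕ) : ℝ)) : ℝ) : ℂ) ^ 2) := by
      have hAB : (∏ j ∈ Finset.Ioc 0 k, g j) * ∏ m ∈ Finset.Ioc 0 k, g (2 * k + 1 + 1 - m)
          = ∏ m ∈ Finset.Icc 1 k,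
            (x ^ 2 + ((Real.cot (Real.pi * m / ((2 * k + 1 + 1 : ℕ) : ℝ)) : ℝ) : ℂ) ^ 2) := by
        rw [← Finset.prod_mul_distrib, hIoc]
        refine Finset.prod_congr rfl ?_
        intro m hm
        rw [Finset.mem_Ioc] at hm
        exact hpairterm m (by omega) (by omega)
      rw [hIoc, ← hsplit2, ← hsplit1, hmid, hre]
      calc (∏ j ∈ Finset.Ioc 0 k, g j) * x * ∏ m ∈ Finset.Ioc 0 k, g (2 * k + 1 + 1 - m)
          = x * ((∏ j ∈ Finset.Ioc 0 k, g j) * ∏ m ∈ Finset.Ioc 0 k, g (2 * k + 1 + 1 - m)) := by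
            ring
        _ = _ := by rw [hAB]
    rw [this]
    push_cast
    ring

end
end

section
/- Let S be an n×n complex matrix that is both unitary and symmetric, let 1 ≤ k ≤ n, let T be the top-left k×k corner of S (so T is symmetric), let A := Re T, B := Im T be its entrywise real and imaginary parts, let M := [[A,B],[B,−A]], and let s ∈ ℝ. Then the series Σ_{ℓ=1}^∞ (tanh^{2ℓ}(2s)/ℓ)·Tr((T·T†)^ℓ) converges absolutely, and det(cosh(2s)·I_{2k} + sinh(2s)·M) = cosh(2s)^{2k}·exp(−Σ_{ℓ=1}^∞ (tanh^{2ℓ}(2s)/ℓ)·Tr((T·T†)^ℓ)). -/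
open scoped BigOperators Topology ENNReal
open MeasureTheory Filter Real Matrix

noncomputable section

namespace Statement16Aux

open scoped ComplexOrder

lemma eig_le_one {m : Type*} [Fintype m] [DecidableEq m]
    {H : Matrix m m ℂ} (hH : H.IsHermitian) (h1 : (1 - H).PosSemidef) (i : m) :
    hH.eigenvalues i ≤ 1 := by
  have hv := hH.mulVec_eigenvectorBasis i
  have h0 := h1.dotProduct_mulVec_nonneg ⇑(hH.eigenvectorBasis i)
  rw [sub_mulVec, one_mulVec, hv, dotProduct_sub] at h0
  have hvv : dotProduct (star ⇑(hH.eigenvectorBasis i)) ⇑(hH.eigenvectorBasis i) = 1 := by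
    rw [dotProduct_comm, ← EuclideanSpace.inner_eq_star_dotProduct, inner_self_eq_norm_sq_to_K,
      hH.eigenvectorBasis.orthonormal.1 i]
    norm_num
  rw [hvv, dotProduct_smul, hvv] at h0
  have : (0:ℂ) ≤ ((1 - hH.eigenvalues i : ℝ) : ℂ) := by
    convert h0 using 1
    push_cast
    simp [Complex.real_smul]
  rw [Complex.zero_le_real] at this
  linarith

lemma corner_psd {k n : ℕ} (hkn : k ≤ n) (S : Matrix (Fin n) (Fin n) ℂ)
    (hU : S ∈ Matrix.unitaryGroup (Fin n) ℂ) :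
    (1 - (S.submatrix (Fin.castLE hkn) (Fin.castLE hkn)) *
      (S.submatrix (Fin.castLE hkn) (Fin.castLE hkn))ᴴ).PosSemidef := by
  set E : Matrix (Fin k) (Fin n) ℂ := (1 : Matrix (Fin n) (Fin n) ℂ).submatrix (Fin.castLE hkn) id
    with hE
  have hEE : E * Eᴴ = 1 := by
    ext i j
    simp only [hE, Matrix.mul_apply, Matrix.conjTranspose_apply, Matrix.submatrix_apply, id,
      Matrix.one_apply]
    simp [Finset.sum_ite_eq, Fin.castLE_inj, apply_ite]
  have hT : S.submatrix (Fin.castLE hkn) (Fin.castLE hkn) = E * S * Eᴴ := by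
    ext i j
    simp only [hE, Matrix.mul_apply, Matrix.conjTranspose_apply, Matrix.submatrix_apply, id,
      Matrix.one_apply]
    simp [Finset.sum_ite_eq, apply_ite]
  have hproj : (1 - Eᴴ * E).PosSemidef := by
    have h2 : (1 - Eᴴ * E) * (1 - Eᴴ * E)ᴴ = 1 - Eᴴ * E := by
      have : (Eᴴ * E) * (Eᴴ * E) = Eᴴ * E := by
        calc (Eᴴ * E) * (Eᴴ * E) = Eᴴ * (E * Eᴴ) * E := by
              simp only [Matrix.mul_assoc]
        _ = Eᴴ * E := by rw [hEE, Matrix.mul_one]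
      simp only [Matrix.conjTranspose_sub, Matrix.conjTranspose_one, Matrix.conjTranspose_mul,
        Matrix.conjTranspose_conjTranspose]
      rw [Matrix.sub_mul, Matrix.mul_sub, Matrix.mul_sub, Matrix.one_mul, Matrix.mul_one, this]
      simp
    rw [← h2]
    exact Matrix.posSemidef_self_mul_conjTranspose _
  have key : 1 - (S.submatrix (Fin.castLE hkn) (Fin.castLE hkn)) *
      (S.submatrix (Fin.castLE hkn) (Fin.castLE hkn))ᴴ
      = (E * S) * (1 - Eᴴ * E) * (E * S)ᴴ := by
    have hSS : S * Sᴴ = 1 := by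
      have := (Matrix.mem_unitaryGroup_iff).mp hU
      simpa [Matrix.star_eq_conjTranspose] using this
    rw [hT]
    simp only [Matrix.conjTranspose_mul, Matrix.conjTranspose_conjTranspose]
    rw [Matrix.mul_sub, Matrix.mul_one, Matrix.sub_mul]
    have h1 : E * S * (Sᴴ * Eᴴ) = 1 := by
      calc E * S * (Sᴴ * Eᴴ) = E * (S * Sᴴ) * Eᴴ := by
            simp only [Matrix.mul_assoc]
      _ = 1 := by rw [hSS, Matrix.mul_one, hEE]
    rw [h1]
    simp only [Matrix.mul_assoc]
  rw [key]
  exact hproj.mul_mul_conjTranspose_same _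

variable {m : Type*} [Fintype m] [DecidableEq m] {H : Matrix m m ℂ}

lemma pow_conj {U D V : Matrix m m ℂ} (hUV : U * V = 1) (hVU : V * U = 1) (p : ℕ) :
    (U * D * V) ^ p = U * D ^ p * V := by
  induction p with
  | zero => simpa using hUV.symm
  | succ p ih =>
      rw [pow_succ, ih, pow_succ]
      calc U * D ^ p * V * (U * D * V) = U * D ^ p * (V * U) * D * V := by
            simp only [Matrix.mul_assoc]
      _ = U * (D ^ p * D) * V := by rw [hVU, Matrix.mul_one]; simp only [Matrix.mul_assoc]

lemma spec_pow (hH : H.IsHermitian) (p : ℕ) :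
    H ^ p = (hH.eigenvectorUnitary : Matrix m m ℂ) *
      Matrix.diagonal (fun i => ((hH.eigenvalues i : ℂ)) ^ p) *
      (star (hH.eigenvectorUnitary : Matrix m m ℂ)) := by
  have hUU : (hH.eigenvectorUnitary : Matrix m m ℂ) *
      (star (hH.eigenvectorUnitary : Matrix m m ℂ)) = 1 :=
    (Matrix.mem_unitaryGroup_iff).mp hH.eigenvectorUnitary.2
  have hUU' : (star (hH.eigenvectorUnitary : Matrix m m ℂ)) *
      (hH.eigenvectorUnitary : Matrix m m ℂ) = 1 :=
    (Matrix.mem_unitaryGroup_iff').mp hH.eigenvectorUnitary.2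
  have h0 : H ^ p = ((hH.eigenvectorUnitary : Matrix m m ℂ) *
      Matrix.diagonal ((fun (x:ℝ) => (x:ℂ)) ∘ hH.eigenvalues) *
      (star (hH.eigenvectorUnitary : Matrix m m ℂ))) ^ p := by
    congr 1
    exact hH.spectral_theorem
  rw [h0, pow_conj hUU hUU', Matrix.diagonal_pow]
  rfl

lemma trace_pow (hH : H.IsHermitian) (p : ℕ) :
    (H ^ p).trace = ((∑ i, hH.eigenvalues i ^ p : ℝ) : ℂ) := by
  rw [spec_pow hH p, Matrix.trace_mul_cycle]
  rw [(Matrix.mem_unitaryGroup_iff').mp hH.eigenvectorUnitary.2, Matrix.one_mul,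
    Matrix.trace_diagonal]
  push_cast
  rfl

lemma det_lin (hH : H.IsHermitian) (a b : ℂ) :
    (a • (1 : Matrix m m ℂ) - b • H).det = ∏ i, (a - b * (hH.eigenvalues i : ℂ)) := by
  have hUU : (hH.eigenvectorUnitary : Matrix m m ℂ) *
      (star (hH.eigenvectorUnitary : Matrix m m ℂ)) = 1 :=
    (Matrix.mem_unitaryGroup_iff).mp hH.eigenvectorUnitary.2
  set U := (hH.eigenvectorUnitary : Matrix m m ℂ)
  have key : a • (1 : Matrix m m ℂ) - b • H =
      U * Matrix.diagonal (fun i => a - b * (hH.eigenvalues i : ℂ)) * star U := by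
    have h1 : a • (1 : Matrix m m ℂ) = U * (a • 1) * star U := by
      rw [Matrix.mul_smul, Matrix.mul_one, Matrix.smul_mul, hUU]
    have h2 : b • H = U * (b • Matrix.diagonal (fun i => (hH.eigenvalues i : ℂ))) * star U := by
      nth_rewrite 1 [hH.spectral_theorem]
      rw [Matrix.mul_smul, Matrix.smul_mul]
      congr 2
    rw [h1, h2, ← Matrix.sub_mul, ← Matrix.mul_sub]
    congr 2
    ext i j
    by_cases h : i = j <;>
      simp [Matrix.diagonal_apply, Matrix.one_apply, h, mul_comm]
  rw [key, Matrix.det_mul, Matrix.det_mul, mul_comm, ← mul_assoc, ← Matrix.det_mul,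
    mul_eq_one_comm.mp hUU, Matrix.det_one, one_mul, Matrix.det_diagonal]

lemma det_block {k : ℕ} (T : Matrix (Fin k) (Fin k) ℂ) (hT : Tᵀ = T) (c sh : ℝ) (hc : c ≠ 0) :
    ((c • (1 : Matrix (Fin k ⊕ Fin k) (Fin k ⊕ Fin k) ℝ) +
        sh • Matrix.fromBlocks (T.map Complex.re) (T.map Complex.im)
          (T.map Complex.im) (-(T.map Complex.re))).det : ℂ) =
      (((c^2 : ℝ) : ℂ) • (1 : Matrix (Fin k) (Fin k) ℂ) - ((sh^2 : ℝ) : ℂ) • (T * Tᴴ)).det := by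
  classical
  set Ac : Matrix (Fin k) (Fin k) ℂ := T.map (fun z => (z.re : ℂ)) with hAc
  set Bc : Matrix (Fin k) (Fin k) ℂ := T.map (fun z => (z.im : ℂ)) with hBc
  have hmap : ((c • (1 : Matrix (Fin k ⊕ Fin k) (Fin k ⊕ Fin k) ℝ) +
        sh • Matrix.fromBlocks (T.map Complex.re) (T.map Complex.im)
          (T.map Complex.im) (-(T.map Complex.re))).map Complex.ofRealHom)
      = Matrix.fromBlocks ((c:ℂ) • 1 + (sh:ℂ) • Ac) ((sh:ℂ) • Bc)
          ((sh:ℂ) • Bc) ((c:ℂ) • 1 - (sh:ℂ) • Ac) := by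
    ext i j
    cases i <;> cases j <;>
      simp [Matrix.fromBlocks, Matrix.one_apply, hAc, hBc, apply_ite (Complex.ofRealHom),
        apply_ite (fun x : ℝ => (x:ℂ)), mul_comm] <;>
      split <;> push_cast <;> ring
  have hdet1 : ((c • (1 : Matrix (Fin k ⊕ Fin k) (Fin k ⊕ Fin k) ℝ) +
        sh • Matrix.fromBlocks (T.map Complex.re) (T.map Complex.im)
          (T.map Complex.im) (-(T.map Complex.re))).det : ℂ)
      = (Matrix.fromBlocks ((c:ℂ) • 1 + (sh:ℂ) • Ac) ((sh:ℂ) • Bc)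
          ((sh:ℂ) • Bc) ((c:ℂ) • 1 - (sh:ℂ) • Ac)).det := by
    rw [← hmap, ← RingHom.mapMatrix_apply, ← RingHom.map_det]
    rfl
  rw [hdet1]
  have hA1 : Ac + Complex.I • Bc = T := by
    ext i j
    simp [hAc, hBc, Complex.ext_iff]
  have hA2 : Ac - Complex.I • Bc = Tᴴ := by
    ext i j
    have h2 : T j i = T i j := congrFun (congrFun hT i) j
    simp [hAc, hBc, Matrix.conjTranspose_apply, h2, Complex.ext_iff]
  set X : Matrix (Fin k ⊕ Fin k) (Fin k ⊕ Fin k) ℂ :=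
    Matrix.fromBlocks ((c:ℂ) • 1 + (sh:ℂ) • Ac) ((sh:ℂ) • Bc)
      ((sh:ℂ) • Bc) ((c:ℂ) • 1 - (sh:ℂ) • Ac) with hX
  set V : Matrix (Fin k ⊕ Fin k) (Fin k ⊕ Fin k) ℂ :=
    Matrix.fromBlocks 1 (Complex.I • 1) 1 (-(Complex.I • 1)) with hV
  set N : Matrix (Fin k ⊕ Fin k) (Fin k ⊕ Fin k) ℂ :=
    Matrix.fromBlocks ((c:ℂ) • 1) ((sh:ℂ) • T) ((sh:ℂ) • Tᴴ) ((c:ℂ) • 1) with hN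
  set W : Matrix (Fin k ⊕ Fin k) (Fin k ⊕ Fin k) ℂ :=
    Matrix.fromBlocks ((2⁻¹:ℂ) • 1) ((2⁻¹:ℂ) • 1)
      ((-(Complex.I/2)) • 1) ((Complex.I/2) • 1) with hW
  have hVW : V * W = 1 := by
    rw [hV, hW, Matrix.fromBlocks_multiply, ← Matrix.fromBlocks_one, Matrix.fromBlocks_inj]
    refine ⟨?_, ?_, ?_, ?_⟩ <;>
      · simp only [Matrix.smul_mul, Matrix.mul_smul, Matrix.one_mul, Matrix.mul_one, smul_smul,
          neg_smul, Matrix.neg_mul, smul_neg, ← add_smul]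
        match_scalars
        all_goals simp [Complex.ext_iff]
        all_goals norm_num
  have hdetV : (V.det) * W.det = 1 := by rw [← Matrix.det_mul, hVW, Matrix.det_one]
  have hVX : V * X = N * V := by
    rw [hV, hX, hN, Matrix.fromBlocks_multiply, Matrix.fromBlocks_multiply,
      Matrix.fromBlocks_inj]
    refine ⟨?_, ?_, ?_, ?_⟩ <;>
      · try simp only [← hA2]
        try simp only [← hA1]
        simp only [Matrix.smul_mul, Matrix.mul_smul, Matrix.one_mul, Matrix.mul_one,
          Matrix.neg_mul, Matrix.mul_neg, smul_add, smul_sub, smul_smul, smul_neg, neg_smul]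
        match_scalars
        all_goals simp [Complex.ext_iff]
        all_goals ring_nf
  have hdetX : X.det = N.det := by
    have h1 : V.det * X.det = N.det * V.det := by
      rw [← Matrix.det_mul, ← Matrix.det_mul, hVX]
    have hVne : V.det ≠ 0 := fun h => by simp [h] at hdetV
    exact mul_left_cancel₀ hVne (h1.trans (mul_comm _ _))
  rw [hdetX, hN]
  have hcC : (c:ℂ) ≠ 0 := by exact_mod_cast hc
  haveI : Invertible ((c:ℂ) • (1 : Matrix (Fin k) (Fin k) ℂ)) :=
    ⟨(c:ℂ)⁻¹ • 1, by rw [smul_mul_smul_comm, inv_mul_cancel₀ hcC, Matrix.one_mul, one_smul],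
      by rw [smul_mul_smul_comm, mul_inv_cancel₀ hcC, Matrix.one_mul, one_smul]⟩
  rw [Matrix.det_fromBlocks₂₂]
  have hinv : (⅟((c:ℂ) • (1 : Matrix (Fin k) (Fin k) ℂ))) = (c:ℂ)⁻¹ • 1 :=
    invOf_eq_right_inv
      (by rw [smul_mul_smul_comm, mul_inv_cancel₀ hcC, Matrix.one_mul, one_smul])
  rw [hinv]
  have hsimp : (c:ℂ) • (1 : Matrix (Fin k) (Fin k) ℂ) -
      ((sh:ℂ) • T) * ((c:ℂ)⁻¹ • 1) * ((sh:ℂ) • Tᴴ)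
      = (c:ℂ) • 1 - ((sh:ℂ)^2 * (c:ℂ)⁻¹) • (T * Tᴴ) := by
    simp only [Matrix.smul_mul, Matrix.mul_smul, Matrix.mul_one, smul_smul]
    ring_nf
  rw [hsimp]
  have hdetc : ((c:ℂ) • (1 : Matrix (Fin k) (Fin k) ℂ)).det = (c:ℂ)^k := by
    simp [Matrix.det_smul]
  rw [hdetc]
  have hfinal : ((c:ℂ)^2) • (1 : Matrix (Fin k) (Fin k) ℂ) - ((sh:ℂ)^2) • (T * Tᴴ)
      = (c:ℂ) • ((c:ℂ) • 1 - ((sh:ℂ)^2 * (c:ℂ)⁻¹) • (T * Tᴴ)) := by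
    rw [smul_sub, smul_smul, smul_smul]
    congr 2
    · ring
    · field_simp
  push_cast
  rw [hfinal, Matrix.det_smul]
  simp [Fintype.card_fin]
  try ring

lemma herm_self_mul {k : ℕ} (T : Matrix (Fin k) (Fin k) ℂ) : (T * Tᴴ).IsHermitian :=
  (Matrix.posSemidef_self_mul_conjTranspose T).1

lemma eig_nonneg' {k : ℕ} {T : Matrix (Fin k) (Fin k) ℂ} (hH : (T * Tᴴ).IsHermitian)
    (i : Fin k) : 0 ≤ hH.eigenvalues i :=
  (Matrix.posSemidef_self_mul_conjTranspose T).eigenvalues_nonneg i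

lemma eig_le_one' {k n : ℕ} (hkn : k ≤ n) (S : Matrix (Fin n) (Fin n) ℂ)
    (hU : S ∈ Matrix.unitaryGroup (Fin n) ℂ)
    (hH : ((S.submatrix (Fin.castLE hkn) (Fin.castLE hkn)) *
      (S.submatrix (Fin.castLE hkn) (Fin.castLE hkn))ᴴ).IsHermitian) (i : Fin k) :
    hH.eigenvalues i ≤ 1 :=
  eig_le_one hH (corner_psd hkn S hU) i

end Statement16Aux

open Statement16Aux

/-- Let `S` be an `n×n` unitary symmetric matrix, `1 ≤ k ≤ n`, `T` its
top-left `k×k` corner, `A = Re T`, `B = Im T`, `M = [[A,B],[B,−A]]`, and `s ∈ ℝ`. Then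
`Σ_{ℓ≥1} (tanh^{2ℓ}(2s)/ℓ)·Tr((T T†)^ℓ)` converges absolutely and
`det(cosh(2s)·1 + sinh(2s)·M) = cosh(2s)^{2k}·exp(−Σ_{ℓ≥1} (tanh^{2ℓ}(2s)/ℓ)·Tr((T T†)^ℓ))`. -/
theorem det_covariance_eq_exp_trace_series {n : ℕ} (k : ℕ) (hk1 : 1 ≤ k) (hkn : k ≤ n)
    (S : Matrix (Fin n) (Fin n) ℂ) (hU : S ∈ Matrix.unitaryGroup (Fin n) ℂ)
    (hS : Sᵀ = S) (s : ℝ) :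
    Summable
      (fun l : ℕ =>
        ‖((Real.tanh (2 * s) ^ (2 * (l + 1)) / ((l : ℝ) + 1) : ℝ) : ℂ) *
            (((S.submatrix (Fin.castLE hkn) (Fin.castLE hkn)) *
                (S.submatrix (Fin.castLE hkn) (Fin.castLE hkn))ᴴ) ^ (l + 1)).trace‖) ∧
      (((Real.cosh (2 * s) • (1 : Matrix (Fin k ⊕ Fin k) (Fin k ⊕ Fin k) ℝ) +
            Real.sinh (2 * s) •
              Matrix.fromBlocks ((S.submatrix (Fin.castLE hkn) (Fin.castLE hkn)).map Complex.re)
                ((S.submatrix (Fin.castLE hkn) (Fin.castLE hkn)).map Complex.im)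
                ((S.submatrix (Fin.castLE hkn) (Fin.castLE hkn)).map Complex.im)
                (-((S.submatrix (Fin.castLE hkn) (Fin.castLE hkn)).map Complex.re))).det : ℝ) : ℂ) =
        ((Real.cosh (2 * s) ^ (2 * k) : ℝ) : ℂ) *
          Complex.exp
            (-∑' l : ℕ,
              ((Real.tanh (2 * s) ^ (2 * (l + 1)) / ((l : ℝ) + 1) : ℝ) : ℂ) *
                (((S.submatrix (Fin.castLE hkn) (Fin.castLE hkn)) *
                    (S.submatrix (Fin.castLE hkn) (Fin.castLE hkn))ᴴ) ^ (l + 1)).trace) := by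
  classical
  set T := S.submatrix (Fin.castLE hkn) (Fin.castLE hkn) with hTdef
  have hTsymm : Tᵀ = T := by
    ext i j
    show T j i = T i j
    exact congrFun (congrFun hS _) _
  have hHerm : (T * Tᴴ).IsHermitian := herm_self_mul T
  set lam := hHerm.eigenvalues with hlam
  have h0 : ∀ i, 0 ≤ lam i := fun i => eig_nonneg' hHerm i
  have h1 : ∀ i, lam i ≤ 1 := fun i => eig_le_one' hkn S hU hHerm i
  set t := Real.tanh (2 * s) with htdef
  set c := Real.cosh (2 * s) with hcdef
  set sh := Real.sinh (2 * s) with hshdef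
  have hcpos : 0 < c := Real.cosh_pos _
  have hct : c * t = sh := by
    rw [htdef, hcdef, hshdef, Real.tanh_eq_sinh_div_cosh]
    field_simp
  have ht2 : t ^ 2 < 1 := by
    rw [htdef, Real.tanh_eq_sinh_div_cosh, div_pow, div_lt_one (by positivity)]
    rw [Real.cosh_sq]
    linarith
  set x : Fin k → ℝ := fun i => t ^ 2 * lam i with hxdef
  have hx0 : ∀ i, 0 ≤ x i := fun i => mul_nonneg (sq_nonneg t) (h0 i)
  have hx1 : ∀ i, x i < 1 := fun i =>
    lt_of_le_of_lt (by
      calc t ^ 2 * lam i ≤ t ^ 2 * 1 := by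
            exact mul_le_mul_of_nonneg_left (h1 i) (sq_nonneg t)
      _ = t ^ 2 := mul_one _) ht2
  have hsum_i : ∀ i, HasSum (fun l : ℕ => (x i) ^ (l + 1) / ((l : ℝ) + 1))
      (-Real.log (1 - x i)) := by
    intro i
    have habs : |x i| < 1 := by rw [abs_of_nonneg (hx0 i)]; exact hx1 i
    exact Real.hasSum_pow_div_log_of_abs_lt_one habs
  set u : ℕ → ℝ := fun l => ∑ i, (x i) ^ (l + 1) / ((l : ℝ) + 1) with hudef
  have hsum : HasSum u (∑ i, -Real.log (1 - x i)) :=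
    hasSum_sum fun i _ => hsum_i i
  have hu0 : ∀ l, 0 ≤ u l := fun l =>
    Finset.sum_nonneg fun i _ => div_nonneg (pow_nonneg (hx0 i) _) (by positivity)
  have hureal : ∀ l : ℕ, u l = t ^ (2 * (l + 1)) / ((l : ℝ) + 1) * ∑ i, lam i ^ (l + 1) := by
    intro l
    rw [hudef, Finset.mul_sum]
    refine Finset.sum_congr rfl fun i _ => ?_
    rw [hxdef]
    simp only []
    rw [mul_pow, ← pow_mul]
    ring
  have hterm : ∀ l : ℕ, ((t ^ (2 * (l + 1)) / ((l : ℝ) + 1) : ℝ) : ℂ) *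
      ((T * Tᴴ) ^ (l + 1)).trace = ((u l : ℝ) : ℂ) := by
    intro l
    rw [trace_pow hHerm (l + 1), ← Complex.ofReal_mul, ← hureal]
  constructor
  · refine (hsum.summable.congr ?_)
    intro l
    rw [hterm l, Complex.norm_real, Real.norm_eq_abs, abs_of_nonneg (hu0 l)]
  · have hLHS := det_block T hTsymm c sh hcpos.ne'
    rw [hLHS, det_lin hHerm ((c^2 : ℝ) : ℂ) ((sh^2 : ℝ) : ℂ)]
    have htsum : (∑' l : ℕ, ((t ^ (2 * (l + 1)) / ((l : ℝ) + 1) : ℝ) : ℂ) *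
        ((T * Tᴴ) ^ (l + 1)).trace) = ((∑ i, -Real.log (1 - x i) : ℝ) : ℂ) := by
      rw [tsum_congr hterm, ← Complex.ofReal_tsum, hsum.tsum_eq]
    rw [htsum, ← Complex.ofReal_neg, ← Complex.ofReal_exp, ← Complex.ofReal_mul]
    have hprod : (∏ i, (((c^2 : ℝ) : ℂ) - ((sh^2 : ℝ) : ℂ) * ((lam i : ℝ) : ℂ)))
        = ((∏ i, (c^2 - sh^2 * lam i) : ℝ) : ℂ) := by
      rw [Complex.ofReal_prod]
      exact Finset.prod_congr rfl fun i _ => by push_cast; ring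
    rw [hprod, Complex.ofReal_inj]
    have hneg : -∑ i, -Real.log (1 - x i) = ∑ i, Real.log (1 - x i) := by simp
    rw [hneg, Real.exp_sum]
    have hexp : ∀ i ∈ Finset.univ, Real.exp (Real.log (1 - x i)) = 1 - x i := fun i _ =>
      Real.exp_log (by linarith [hx1 i])
    rw [Finset.prod_congr rfl hexp]
    have hper : ∀ i ∈ Finset.univ, c^2 - sh^2 * lam i = c^2 * (1 - x i) := by
      intro i _
      rw [hxdef]
      simp only []
      rw [← hct]
      ring
    rw [Finset.prod_congr rfl hper, Finset.prod_mul_distrib, Finset.prod_const,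
      Finset.card_univ, Fintype.card_fin, ← pow_mul]

end
end

section
/- Let α ≥ 2 be an integer, s ∈ ℝ, k ≥ 1 an integer, and w_1,…,w_k ∈ [0,1]. Set ν_j := √(cosh²(2s) − sinh²(2s)·w_j) ≥ 1, ζ := 1 if α is even and 0 if α is odd, and a := ⌊(α−1)/2⌋. Then (1/(α−1))·Σ_{j=1}^k log(((ν_j+1)^α − (ν_j−1)^α)/2^α) = (ζ/(α−1))·Σ_{j=1}^k log ν_j + (1/(α−1))·Σ_{ℓ=1}^∞ Σ_{m=1}^{a} (sinh^{2ℓ}(2s)/(ℓ·(cosh²(2s) + cot²(πm/α))^ℓ))·(k − Σ_{j=1}^k w_j^ℓ), where the double series on the right converges absolutely. -/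
open scoped BigOperators Topology ENNReal
open MeasureTheory Filter Real Matrix

noncomputable section

private lemma icot_alg (c s : ℂ) (hs : s ≠ 0) (hsc : s^2 + c^2 = 1) :
    (Complex.I * (c/s)) * (1 - (c + s*Complex.I)^2) = 1 + (c + s*Complex.I)^2 := by
  have h1 : 1 + (c + s*Complex.I)^2 = 2*c*(c + s*Complex.I) := by
    linear_combination s^2*Complex.I_sq - hsc
  have h2 : 1 - (c + s*Complex.I)^2 = -2*Complex.I*s*(c + s*Complex.I) := by
    linear_combination s^2*Complex.I_sq - hsc
  rw [h1, h2]
  have hcs : c/s*s = c := div_mul_cancel₀ c hs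
  linear_combination (-2*Complex.I^2*(c + s*Complex.I))*hcs + (-2*c*(c + s*Complex.I))*Complex.I_sq

lemma aux_icot {θ : ℝ} (h0 : 0 < θ) (hπ : θ < Real.pi) :
    (Complex.I * (Real.cot θ : ℂ)) * (1 - Complex.exp (2*θ*Complex.I))
      = 1 + Complex.exp (2*θ*Complex.I) := by
  have hs : Real.sin θ ≠ 0 := ne_of_gt (Real.sin_pos_of_pos_of_lt_pi h0 hπ)
  have he : Complex.exp (2*θ*Complex.I) = ((Real.cos θ : ℂ) + (Real.sin θ : ℂ)*Complex.I)^2 := by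
    have : (2*(θ:ℂ)*Complex.I) = (θ:ℂ)*Complex.I + (θ:ℂ)*Complex.I := by ring
    rw [this, Complex.exp_add, Complex.exp_mul_I, ← Complex.ofReal_cos, ← Complex.ofReal_sin]
    ring
  have hcot : (Real.cot θ : ℂ) = (Real.cos θ : ℂ) / (Real.sin θ : ℂ) := by
    rw [Real.cot_eq_cos_div_sin]; push_cast; ring
  have hs' : (Real.sin θ : ℂ) ≠ 0 := Complex.ofReal_ne_zero.mpr hs
  have hsc : (Real.sin θ : ℂ)^2 + (Real.cos θ : ℂ)^2 = 1 := by
    have := Real.sin_sq_add_cos_sq θ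
    exact_mod_cast congrArg Complex.ofReal this
  rw [he, hcot]
  exact icot_alg _ _ hs' hsc

open Finset in
lemma aux_prodA (α : ℕ) (hα : 2 ≤ α) (z : ℂ) :
    (z+1)^α - (z-1)^α
      = 2*(α:ℂ) * ∏ m ∈ Finset.Ico 1 α, (z + Complex.I * (Real.cot (Real.pi*m/α) : ℂ)) := by
  have hα0 : (0:ℕ) < α := by omega
  have hαC : (α:ℂ) ≠ 0 := Nat.cast_ne_zero.mpr (by omega)
  set ω : ℂ := Complex.exp (2*Real.pi*Complex.I/α) with hω
  have hprim : IsPrimitiveRoot ω α := Complex.isPrimitiveRoot_exp α (by omega)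
  have hpoly : ∀ u : ℂ, u^α - 1 = ∏ i ∈ Finset.range α, (u - ω^i) := by
    intro u
    have := X_pow_sub_C_eq_prod hprim hα0 (one_pow α)
    have := congrArg (Polynomial.eval u) this
    simpa [Polynomial.eval_prod] using this
  have hexp : ∀ m : ℕ, 0 < m → m < α →
      Complex.exp (2*((Real.pi*m/α : ℝ):ℂ)*Complex.I) = ω^m := by
    intro m hm hmα
    rw [hω, ← Complex.exp_nat_mul]
    congr 1
    push_cast
    field_simp
  have hicot : ∀ m ∈ Finset.Ico 1 α,
      (Complex.I * (Real.cot (Real.pi*m/α) : ℂ)) * (1 - ω^m) = 1 + ω^m := by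
    intro m hm
    rw [Finset.mem_Ico] at hm
    have h0 : 0 < Real.pi*m/α := by
      apply div_pos (mul_pos Real.pi_pos (by exact_mod_cast Nat.pos_of_ne_zero (by omega)))
      exact_mod_cast hα0
    have h1 : Real.pi*m/α < Real.pi := by
      rw [div_lt_iff₀ (by exact_mod_cast hα0)]
      have : (m:ℝ) < α := by exact_mod_cast hm.2
      nlinarith [Real.pi_pos]
    have := aux_icot h0 h1
    rwa [hexp m hm.1 hm.2] at this
  have hconst : ∏ m ∈ Finset.Ico 1 α, (1 - ω^m) = (α:ℂ) := by
    rw [Finset.prod_Ico_eq_prod_range]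
    have hprim' : IsPrimitiveRoot ω ((α-1)+1) := by
      rwa [Nat.sub_add_cancel (by omega)]
    have := hprim'.prod_one_sub_pow_eq_order
    have h' : ∏ k ∈ Finset.range (α-1), (1 - ω^(1+k)) = ∏ k ∈ Finset.range (α-1), (1 - ω^(k+1)) := by
      apply Finset.prod_congr rfl; intro i _; rw [add_comm]
    rw [h', this]
    push_cast [Nat.cast_sub (by omega : 1 ≤ α)]
    ring
  -- case z ≠ 1
  have key : ∀ z : ℂ, z ≠ 1 → (z+1)^α - (z-1)^α
      = 2*(α:ℂ) * ∏ m ∈ Finset.Ico 1 α, (z + Complex.I * (Real.cot (Real.pi*m/α) : ℂ)) := by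
    intro z hz
    have hz1 : z - 1 ≠ 0 := sub_ne_zero.mpr hz
    set u : ℂ := (z+1)/(z-1) with hu
    have h1 : (z+1)^α - (z-1)^α = (z-1)^α * (u^α - 1) := by
      rw [hu, div_pow, mul_sub, mul_div_assoc', mul_div_cancel_left₀ _ (pow_ne_zero _ hz1), mul_one]
    have h2 : (z-1)^α * (u^α - 1) = ∏ i ∈ Finset.range α, ((z+1) - ω^i*(z-1)) := by
      have hc : (z-1)^α = ∏ _i ∈ Finset.range α, (z-1) := by rw [Finset.prod_const, Finset.card_range]
      rw [hpoly u, hc, ← Finset.prod_mul_distrib]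
      apply Finset.prod_congr rfl; intro i _
      rw [hu]
      field_simp
    have h3 : ∏ i ∈ Finset.range α, ((z+1) - ω^i*(z-1))
        = 2 * ∏ m ∈ Finset.Ico 1 α, ((z+1) - ω^m*(z-1)) := by
      rw [Finset.range_eq_Ico, Finset.prod_eq_prod_Ico_succ_bot hα0, pow_zero]
      ring
    have h4 : ∏ m ∈ Finset.Ico 1 α, ((z+1) - ω^m*(z-1))
        = (∏ m ∈ Finset.Ico 1 α, (z + Complex.I * (Real.cot (Real.pi*m/α) : ℂ))) * ∏ m ∈ Finset.Ico 1 α, (1 - ω^m) := by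
      rw [← Finset.prod_mul_distrib]
      apply Finset.prod_congr rfl; intro m hm
      have := hicot m hm
      linear_combination -this
    rw [h1, h2, h3, h4, hconst]
    ring
  rcases eq_or_ne z 1 with rfl | hz
  · have hf : Continuous fun z : ℂ => (z+1)^α - (z-1)^α := by fun_prop
    have hg : Continuous fun z : ℂ =>
        2*(α:ℂ) * ∏ m ∈ Finset.Ico 1 α, (z + Complex.I * (Real.cot (Real.pi*m/α) : ℂ)) := by
      apply Continuous.mul continuous_const
      apply continuous_finset_prod
      intro m _
      fun_prop
    have heq := Continuous.ext_on (dense_compl_singleton (1:ℂ)) hf hg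
      (fun z hz => key z (Set.mem_compl_singleton_iff.mp hz))
    exact congrFun heq 1
  · exact key z hz


lemma pairsym (n : ℕ) (hn : 2 ≤ n) (G : ℕ → ℝ) (hG : ∀ m, 0 < m → m < n → G (n-m) = G m) :
    ∏ m ∈ Finset.Ico 1 n, G m
      = (if Even n then G (n/2) else 1) * (∏ m ∈ Finset.Icc 1 ((n-1)/2), G m)^2 := by
  have hIco : Finset.Ico 1 n = Finset.Ioc 0 (n-1) := by
    rw [← Finset.Icc_add_one_left_eq_Ioc, ← Finset.Ico_add_one_right_eq_Icc]
    congr 1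
    omega
  have hIcc : ∀ x : ℕ, Finset.Icc 1 x = Finset.Ioc 0 x := fun x => (Finset.Icc_add_one_left_eq_Ioc 0 x)
  rw [hIco, hIcc]
  have reflect : ∀ b c : ℕ, b + c + 1 = n → c ≤ b →
      ∏ m ∈ Finset.Ioc b (n-1), G m = ∏ m ∈ Finset.Ioc 0 c, G m := by
    intro b c hbc hcb
    apply Finset.prod_nbij' (fun m => n - m) (fun m => n - m)
    · intro m hm; rw [Finset.mem_Ioc] at *; omega
    · intro m hm; rw [Finset.mem_Ioc] at *; omega
    · intro m hm; rw [Finset.mem_Ioc] at hm; omega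
    · intro m hm; rw [Finset.mem_Ioc] at hm; omega
    · intro m hm; rw [Finset.mem_Ioc] at hm
      exact (hG m (by omega) (by omega)).symm
  rcases Nat.even_or_odd n with he | ho
  · obtain ⟨b, hb⟩ := he
    have hb1 : 1 ≤ b := by omega
    have hsplit1 : (∏ m ∈ Finset.Ioc 0 (b-1), G m) * ∏ m ∈ Finset.Ioc (b-1) (n-1), G m
        = ∏ m ∈ Finset.Ioc 0 (n-1), G m := Finset.prod_Ioc_consecutive _ (by omega) (by omega)
    have hsplit2 : (∏ m ∈ Finset.Ioc (b-1) b, G m) * ∏ m ∈ Finset.Ioc b (n-1), G m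
        = ∏ m ∈ Finset.Ioc (b-1) (n-1), G m := Finset.prod_Ioc_consecutive _ (by omega) (by omega)
    have hmid : ∏ m ∈ Finset.Ioc (b-1) b, G m = G b := by
      have h1 : Finset.Ioc (b-1) b = {b} := by
        ext x
        simp only [Finset.mem_Ioc, Finset.mem_singleton]
        omega
      rw [h1, Finset.prod_singleton]
    have hrefl := reflect b (b-1) (by omega) (by omega)
    have hif : (if Even n then G (n/2) else 1) = G b := by
      rw [if_pos ⟨b, hb⟩]; congr 1; omega
    have ha : (n-1)/2 = b - 1 := by omega
    rw [ha, hif, ← hsplit1, ← hsplit2, hmid, hrefl]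
    ring
  · obtain ⟨b, hb⟩ := ho
    have hb1 : 1 ≤ b := by omega
    have hsplit1 : (∏ m ∈ Finset.Ioc 0 b, G m) * ∏ m ∈ Finset.Ioc b (n-1), G m
        = ∏ m ∈ Finset.Ioc 0 (n-1), G m := Finset.prod_Ioc_consecutive _ (by omega) (by omega)
    have hrefl := reflect b b (by omega) (by omega)
    have hif : (if Even n then G (n/2) else 1) = 1 := by
      rw [if_neg]; rw [Nat.even_iff]; omega
    have ha : (n-1)/2 = b := by omega
    rw [ha, hif, ← hsplit1, hrefl]
    ring

lemma cot_reflect (α m : ℕ) (hα : 0 < α) (hm2 : m ≤ α) :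
    Real.cot (Real.pi*((α-m : ℕ))/α) = - Real.cot (Real.pi*m/α) := by
  have hαR : (0:ℝ) < α := by exact_mod_cast hα
  have harg : Real.pi*((α-m : ℕ))/α = Real.pi - Real.pi*m/α := by
    rw [Nat.cast_sub hm2]
    field_simp
  rw [harg, Real.cot_eq_cos_div_sin, Real.cot_eq_cos_div_sin, Real.cos_pi_sub, Real.sin_pi_sub,
    neg_div]

lemma cot_pi_div_two' : Real.cot (Real.pi/2) = 0 := by
  rw [Real.cot_eq_cos_div_sin, Real.cos_pi_div_two, zero_div]

lemma aux_real_fact (α : ℕ) (hα : 2 ≤ α) (ν : ℝ) (hν : 1 ≤ ν) :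
    (ν+1)^α - (ν-1)^α
      = 2*(α:ℝ) * ν^(if Even α then 1 else 0 : ℕ)
        * ∏ m ∈ Finset.Icc 1 ((α-1)/2), (ν^2 + Real.cot (Real.pi*m/α)^2) := by
  have hα0 : 0 < α := by omega
  have hαR : (0:ℝ) < α := by exact_mod_cast hα0
  set c : ℕ → ℝ := fun m => Real.cot (Real.pi*m/α) with hc
  set P : ℂ := ∏ m ∈ Finset.Ico 1 α, ((ν:ℂ) + Complex.I * (c m : ℂ)) with hP
  have hrefl : ∏ m ∈ Finset.Ico 1 α, ((ν:ℂ) - Complex.I * (c m : ℂ)) = P := by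
    rw [hP]
    apply Finset.prod_nbij' (fun m => α - m) (fun m => α - m)
    · intro m hm; rw [Finset.mem_Ico] at *; omega
    · intro m hm; rw [Finset.mem_Ico] at *; omega
    · intro m hm; rw [Finset.mem_Ico] at hm; omega
    · intro m hm; rw [Finset.mem_Ico] at hm; omega
    · intro m hm; rw [Finset.mem_Ico] at hm
      have := cot_reflect α m hα0 (by omega)
      simp only [hc, this]
      push_cast
      ring
  have hAc : (((ν+1)^α - (ν-1)^α : ℝ) : ℂ) = 2*(α:ℂ) * P := by
    push_cast
    exact aux_prodA α hα (ν:ℂ)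
  have hterm : ∀ m ∈ Finset.Ico 1 α,
      ((ν:ℂ) + Complex.I * (c m : ℂ)) * ((ν:ℂ) - Complex.I * (c m : ℂ))
        = ((ν^2 + c m^2 : ℝ) : ℂ) := by
    intro m _
    push_cast
    linear_combination (-(c m:ℂ)^2) * Complex.I_sq
  have hsq : ((ν+1)^α - (ν-1)^α : ℝ)^2
      = 4*(α:ℝ)^2 * ∏ m ∈ Finset.Ico 1 α, (ν^2 + c m^2) := by
    have h2 : ((((ν+1)^α - (ν-1)^α : ℝ)^2 : ℝ) : ℂ)
        = ((4*(α:ℝ)^2 * ∏ m ∈ Finset.Ico 1 α, (ν^2 + c m^2) : ℝ) : ℂ) := by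
      rw [Complex.ofReal_pow, hAc]
      rw [show (2*(α:ℂ)*P)^2 = 4*(α:ℂ)^2 * (P * P) by ring]
      nth_rewrite 2 [← hrefl]
      rw [hP, ← Finset.prod_mul_distrib, Finset.prod_congr rfl hterm]
      push_cast
      ring
    exact_mod_cast h2
  set G : ℕ → ℝ := fun m => ν^2 + c m^2 with hG
  have hGsym : ∀ m, 0 < m → m < α → G (α-m) = G m := by
    intro m h1 h2
    simp only [hG, hc, cot_reflect α m hα0 h2.le]
    ring
  have hpair := pairsym α hα G hGsym
  have hmid : (if Even α then G (α/2) else 1) = ν^(2*(if Even α then 1 else 0 : ℕ)) := by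
    by_cases he : Even α
    · rw [if_pos he, if_pos he]
      have : Real.pi*((α/2 : ℕ))/α = Real.pi/2 := by
        obtain ⟨b, hb⟩ := he
        have hb0 : (0:ℝ) < b := by exact_mod_cast (by omega : 0 < b)
        rw [show α/2 = b by omega, hb]
        push_cast
        field_simp
        ring
      simp only [hG, hc, this, cot_pi_div_two']
      norm_num
    · rw [if_neg he, if_neg he]
      norm_num
  have hL : 0 < (ν+1)^α - (ν-1)^α := by
    have h1 : (ν-1)^α < (ν+1)^α :=
      pow_lt_pow_left₀ (by linarith) (by linarith) (by omega)
    linarith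
  have hQ : 0 < ∏ m ∈ Finset.Icc 1 ((α-1)/2), (ν^2 + c m^2) := by
    apply Finset.prod_pos
    intro m _
    nlinarith [sq_nonneg (c m), sq_nonneg ν]
  have hR : 0 < 2*(α:ℝ) * ν^(if Even α then 1 else 0 : ℕ)
      * ∏ m ∈ Finset.Icc 1 ((α-1)/2), (ν^2 + c m^2) := by
    apply mul_pos (mul_pos (by linarith) (pow_pos (by linarith) _)) hQ
  have hsq2 : ((ν+1)^α - (ν-1)^α)^2
      = (2*(α:ℝ) * ν^(if Even α then 1 else 0 : ℕ)
        * ∏ m ∈ Finset.Icc 1 ((α-1)/2), (ν^2 + c m^2))^2 := by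
    rw [hsq, hpair, hmid, pow_mul]
    ring
  exact (pow_left_inj₀ hL.le hR.le two_ne_zero).mp hsq2

lemma ratio_helper (t PA PB z : ℝ) (ht : t ≠ 0) (hPB : PB ≠ 0) :
    (t * z * PA)/(t * PB) = z * (PA/PB) := by
  field_simp


/-- For `α ≥ 2`, `s ∈ ℝ`, `k ≥ 1` and `w_1,…,w_k ∈ [0,1]`, with
`ν_j = √(cosh²(2s) − sinh²(2s) w_j)`, `ζ = 1` for even `α`, `ζ = 0` for odd `α`, and
`a = ⌊(α−1)/2⌋`:
`(1/(α−1))·Σ_j log(((ν_j+1)^α − (ν_j−1)^α)/2^α) = (ζ/(α−1))·Σ_j log ν_j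
  + (1/(α−1))·Σ_{ℓ≥1} Σ_{m=1}^a (sinh^{2ℓ}(2s)/(ℓ·(cosh²(2s)+cot²(πm/α))^ℓ))·(k − Σ_j w_j^ℓ)`,
and the double series converges absolutely. -/
theorem renyi_entropy_series_expansion (α : ℕ) (hα : 2 ≤ α) (s : ℝ) (k : ℕ) (hk : 1 ≤ k)
    (w : Fin k → ℝ) (hw : ∀ j, w j ∈ Set.Icc (0 : ℝ) 1) :
    Summable
      (fun l : ℕ =>
        ∑ m ∈ Finset.Icc 1 ((α - 1) / 2),
          |Real.sinh (2 * s) ^ (2 * (l + 1)) /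
              (((l : ℝ) + 1) *
                (Real.cosh (2 * s) ^ 2 + Real.cot (Real.pi * m / α) ^ 2) ^ (l + 1)) *
            ((k : ℝ) - ∑ j : Fin k, w j ^ (l + 1))|) ∧
      (1 / ((α : ℝ) - 1)) *
          ∑ j : Fin k,
            Real.log
              (((Real.sqrt (Real.cosh (2 * s) ^ 2 - Real.sinh (2 * s) ^ 2 * w j) + 1) ^ α -
                  (Real.sqrt (Real.cosh (2 * s) ^ 2 - Real.sinh (2 * s) ^ 2 * w j) - 1) ^ α) /
                2 ^ α) =
        ((if Even α then (1 : ℝ) else 0) / ((α : ℝ) - 1)) *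
            ∑ j : Fin k,
              Real.log (Real.sqrt (Real.cosh (2 * s) ^ 2 - Real.sinh (2 * s) ^ 2 * w j)) +
          (1 / ((α : ℝ) - 1)) *
            ∑' l : ℕ,
              ∑ m ∈ Finset.Icc 1 ((α - 1) / 2),
                Real.sinh (2 * s) ^ (2 * (l + 1)) /
                    (((l : ℝ) + 1) *
                      (Real.cosh (2 * s) ^ 2 + Real.cot (Real.pi * m / α) ^ 2) ^ (l + 1)) *
                  ((k : ℝ) - ∑ j : Fin k, w j ^ (l + 1)) := by
  have hα0 : 0 < α := by omega
  set S : ℝ := Real.sinh (2*s) ^ 2 with hSdef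
  set C : ℝ := Real.cosh (2*s) ^ 2 with hCdef
  have hCS : C = S + 1 := Real.cosh_sq (2*s)
  have hS0 : (0:ℝ) ≤ S := sq_nonneg _
  -- abbreviations (not `set`, used via explicit equalities)
  have hw0 : ∀ j, 0 ≤ w j := fun j => (hw j).1
  have hw1 : ∀ j, w j ≤ 1 := fun j => (hw j).2
  have hc2 : ∀ m : ℕ, (0:ℝ) ≤ Real.cot (Real.pi*m/α)^2 := fun m => sq_nonneg _
  have hD : ∀ m : ℕ, 0 < C + Real.cot (Real.pi*m/α)^2 := by
    intro m; nlinarith [hc2 m]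
  have hDS : ∀ m : ℕ, S < C + Real.cot (Real.pi*m/α)^2 := by
    intro m; nlinarith [hc2 m]
  have hx0 : ∀ (j : Fin k) (m : ℕ), 0 ≤ S * w j / (C + Real.cot (Real.pi*m/α)^2) :=
    fun j m => div_nonneg (mul_nonneg hS0 (hw0 j)) (hD m).le
  have hx1 : ∀ (j : Fin k) (m : ℕ), S * w j / (C + Real.cot (Real.pi*m/α)^2) < 1 := by
    intro j m
    rw [div_lt_one (hD m)]
    nlinarith [hw0 j, hw1 j, hDS m]
  have hy0 : ∀ m : ℕ, 0 ≤ S / (C + Real.cot (Real.pi*m/α)^2) :=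
    fun m => div_nonneg hS0 (hD m).le
  have hy1 : ∀ m : ℕ, S / (C + Real.cot (Real.pi*m/α)^2) < 1 := by
    intro m
    rw [div_lt_one (hD m)]
    exact hDS m
  -- per (m,j) HasSum
  have hHx : ∀ (m : ℕ) (j : Fin k),
      HasSum (fun l : ℕ => (S * w j / (C + Real.cot (Real.pi*m/α)^2))^(l+1)/((l:ℝ)+1))
        (-Real.log (1 - S * w j / (C + Real.cot (Real.pi*m/α)^2))) := by
    intro m j
    have := Real.hasSum_pow_div_log_of_abs_lt_one
      (x := S * w j / (C + Real.cot (Real.pi*m/α)^2))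
      (by rw [abs_of_nonneg (hx0 j m)]; exact hx1 j m)
    exact this
  have hHy : ∀ m : ℕ,
      HasSum (fun l : ℕ => (S / (C + Real.cot (Real.pi*m/α)^2))^(l+1)/((l:ℝ)+1))
        (-Real.log (1 - S / (C + Real.cot (Real.pi*m/α)^2))) := by
    intro m
    have := Real.hasSum_pow_div_log_of_abs_lt_one
      (x := S / (C + Real.cot (Real.pi*m/α)^2))
      (by rw [abs_of_nonneg (hy0 m)]; exact hy1 m)
    exact this
  -- the big HasSum
  have hBig : HasSum
      (fun l : ℕ => ∑ m ∈ Finset.Icc 1 ((α-1)/2), ∑ j : Fin k,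
        ((S / (C + Real.cot (Real.pi*m/α)^2))^(l+1)
          - (S * w j / (C + Real.cot (Real.pi*m/α)^2))^(l+1))/((l:ℝ)+1))
      (∑ m ∈ Finset.Icc 1 ((α-1)/2), ∑ j : Fin k,
        (Real.log (1 - S * w j / (C + Real.cot (Real.pi*m/α)^2))
          - Real.log (1 - S / (C + Real.cot (Real.pi*m/α)^2)))) := by
    apply hasSum_sum
    intro m _
    apply hasSum_sum
    intro j _
    have h := (hHy m).sub (hHx m j)
    convert h using 1
    · rfl
    · funext l
      rw [sub_div]
    · ring
  -- pointwise identification of the series terms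
  have hptw : ∀ l : ℕ,
      (∑ m ∈ Finset.Icc 1 ((α - 1) / 2),
        Real.sinh (2 * s) ^ (2 * (l + 1)) /
            (((l : ℝ) + 1) * (C + Real.cot (Real.pi * m / α) ^ 2) ^ (l + 1)) *
          ((k : ℝ) - ∑ j : Fin k, w j ^ (l + 1)))
      = ∑ m ∈ Finset.Icc 1 ((α-1)/2), ∑ j : Fin k,
        ((S / (C + Real.cot (Real.pi*m/α)^2))^(l+1)
          - (S * w j / (C + Real.cot (Real.pi*m/α)^2))^(l+1))/((l:ℝ)+1) := by
    intro l
    apply Finset.sum_congr rfl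
    intro m _
    have hsinh : Real.sinh (2*s) ^ (2*(l+1)) = S^(l+1) := by
      rw [pow_mul]
    have hterm : ∀ j : Fin k,
        ((S / (C + Real.cot (Real.pi*m/α)^2))^(l+1)
          - (S * w j / (C + Real.cot (Real.pi*m/α)^2))^(l+1))/((l:ℝ)+1)
        = S^(l+1) / (((l:ℝ)+1) * (C + Real.cot (Real.pi*m/α)^2)^(l+1))
          - S^(l+1) / (((l:ℝ)+1) * (C + Real.cot (Real.pi*m/α)^2)^(l+1)) * w j^(l+1) := by
      intro j
      have hne : (C + Real.cot (Real.pi*m/α)^2) ≠ 0 := (hD m).ne'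
      have hl1 : ((l:ℝ)+1) ≠ 0 := by positivity
      generalize C + Real.cot (Real.pi*m/α)^2 = D at hne ⊢
      rw [div_pow, div_pow, mul_pow]
      simp only [div_eq_mul_inv, mul_inv]
      ring
    rw [Finset.sum_congr rfl (fun j _ => hterm j), Finset.sum_sub_distrib,
      Finset.sum_const, ← Finset.mul_sum, Finset.card_univ, Fintype.card_fin, hsinh]
    push_cast
    ring
  -- nonnegativity of the series terms
  have hnonneg : ∀ (l : ℕ) (m : ℕ),
      0 ≤ Real.sinh (2 * s) ^ (2 * (l + 1)) /
            (((l : ℝ) + 1) * (C + Real.cot (Real.pi * m / α) ^ 2) ^ (l + 1)) *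
          ((k : ℝ) - ∑ j : Fin k, w j ^ (l + 1)) := by
    intro l m
    apply mul_nonneg
    · apply div_nonneg
      · rw [pow_mul]; positivity
      · positivity
    · have h2 : ∑ j : Fin k, w j ^ (l+1) ≤ (k:ℝ) := by
        have := Finset.sum_le_card_nsmul Finset.univ (fun j => w j ^ (l+1)) 1
          (fun j _ => pow_le_one₀ (hw0 j) (hw1 j))
        simpa using this
      linarith
  have hSum0 : Summable
      (fun l : ℕ => ∑ m ∈ Finset.Icc 1 ((α - 1) / 2),
        Real.sinh (2 * s) ^ (2 * (l + 1)) /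
            (((l : ℝ) + 1) * (C + Real.cot (Real.pi * m / α) ^ 2) ^ (l + 1)) *
          ((k : ℝ) - ∑ j : Fin k, w j ^ (l + 1))) :=
    hBig.summable.congr (fun l => (hptw l).symm)
  constructor
  · apply hSum0.congr
    intro l
    exact Finset.sum_congr rfl (fun m _ => (abs_of_nonneg (hnonneg l m)).symm)
  · have hGoal := hBig
    rw [← funext hptw] at hGoal
    rw [hGoal.tsum_eq]
    -- pure algebra from here
    have hν1 : ∀ j : Fin k, 1 ≤ Real.sqrt (C - S * w j) := by
      intro j
      rw [Real.one_le_sqrt]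
      nlinarith [hw1 j, hS0]
    have hν2 : ∀ j : Fin k, (Real.sqrt (C - S * w j))^2 = C - S * w j := by
      intro j
      rw [Real.sq_sqrt]
      nlinarith [hw1 j, hS0]
    have hαne : (α:ℝ) ≠ 0 := Nat.cast_ne_zero.mpr (by omega)
    have hconst : (2:ℝ)^α = 2*(α:ℝ)
        * ∏ m ∈ Finset.Icc 1 ((α-1)/2), (1 + Real.cot (Real.pi*m/α)^2) := by
      have h := aux_real_fact α hα 1 le_rfl
      norm_num [zero_pow (by omega : α ≠ 0)] at h
      convert h using 3
    have hlogj : ∀ j : Fin k,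
        Real.log (((Real.sqrt (C - S * w j) + 1) ^ α - (Real.sqrt (C - S * w j) - 1) ^ α) / 2 ^ α)
          = (if Even α then (1:ℝ) else 0) * Real.log (Real.sqrt (C - S * w j))
            + ∑ m ∈ Finset.Icc 1 ((α-1)/2),
              (Real.log (1 - S * w j / (C + Real.cot (Real.pi*m/α)^2))
                - Real.log (1 - S / (C + Real.cot (Real.pi*m/α)^2))) := by
      intro j
      set ν : ℝ := Real.sqrt (C - S * w j) with hνdef
      have hν0 : (0:ℝ) < ν := lt_of_lt_of_le one_pos (hν1 j)
      have hA : ∀ m : ℕ, (0:ℝ) < ν^2 + Real.cot (Real.pi*m/α)^2 := by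
        intro m; nlinarith [hc2 m]
      have hB : ∀ m : ℕ, (0:ℝ) < 1 + Real.cot (Real.pi*m/α)^2 := by
        intro m; nlinarith [hc2 m]
      have hPA : (0:ℝ) < ∏ m ∈ Finset.Icc 1 ((α-1)/2), (ν^2 + Real.cot (Real.pi*m/α)^2) :=
        Finset.prod_pos (fun m _ => hA m)
      have hPB : (0:ℝ) < ∏ m ∈ Finset.Icc 1 ((α-1)/2), (1 + Real.cot (Real.pi*m/α)^2) :=
        Finset.prod_pos (fun m _ => hB m)
      have hratio : ((ν+1)^α - (ν-1)^α)/2^α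
          = ν^(if Even α then 1 else 0 : ℕ)
            * ∏ m ∈ Finset.Icc 1 ((α-1)/2),
                ((ν^2 + Real.cot (Real.pi*m/α)^2)/(1 + Real.cot (Real.pi*m/α)^2)) := by
        rw [aux_real_fact α hα ν (hν1 j), hconst, Finset.prod_div_distrib]
        exact ratio_helper _ _ _ _ (by positivity) hPB.ne'
      have hζne : ν^(if Even α then 1 else 0 : ℕ) ≠ 0 := pow_ne_zero _ hν0.ne'
      have hPDne : (∏ m ∈ Finset.Icc 1 ((α-1)/2),
          ((ν^2 + Real.cot (Real.pi*m/α)^2)/(1 + Real.cot (Real.pi*m/α)^2))) ≠ 0 :=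
        (Finset.prod_pos (fun m _ => div_pos (hA m) (hB m))).ne'
      rw [hratio, Real.log_mul hζne hPDne,
        Real.log_prod (fun m _ => div_ne_zero (hA m).ne' (hB m).ne')]
      congr 1
      · by_cases he : Even α
        · simp [he]
        · simp [he]
      · apply Finset.sum_congr rfl
        intro m _
        have hxeq : 1 - S * w j / (C + Real.cot (Real.pi*m/α)^2)
            = (ν^2 + Real.cot (Real.pi*m/α)^2) / (C + Real.cot (Real.pi*m/α)^2) := by
          have h2 : ν^2 = C - S * w j := hν2 j
          rw [eq_div_iff (hD m).ne', sub_mul, div_mul_cancel₀ _ (hD m).ne']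
          linarith
        have hyeq : 1 - S / (C + Real.cot (Real.pi*m/α)^2)
            = (1 + Real.cot (Real.pi*m/α)^2) / (C + Real.cot (Real.pi*m/α)^2) := by
          rw [eq_div_iff (hD m).ne', sub_mul, div_mul_cancel₀ _ (hD m).ne']
          linarith [hCS]
        rw [hxeq, hyeq, Real.log_div (hA m).ne' (hD m).ne', Real.log_div (hB m).ne' (hD m).ne',
          Real.log_div (hA m).ne' (hB m).ne']
        ring
    rw [Finset.sum_congr rfl (fun j _ => hlogj j), Finset.sum_add_distrib, ← Finset.mul_sum,
      Finset.sum_comm]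
    ring

end
end
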